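/- arXiv:2004.05130 — 12 statements merged into one kernel-verified Lean document; each statement's English description precedes it below -/
import Mathlib

section
/- Let M be a 2-torsion free Γ-ring satisfying assumption (A) (aαbβc = aβbαc for all a,b,c ∈ M and α,β ∈ Γ), and U a Lie ideal of M with u·α·u ∈ U for all u ∈ U, α ∈ Γ. If T : M → M is an additive map with T(u·α·u) = T(u)·α·u for all u ∈ U, α ∈ Γ, then T(uαvβu) = T(u)αvβu for all u, v ∈ U and α, β ∈ Γ. -/
theorem stmt1
    {M G : Type*} [AddCommGroup M] [AddCommGroup G]
    (p : M → G → M → M)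
    (addl : ∀ a b α c, p (a + b) α c = p a α c + p b α c)
    (addm : ∀ a α β c, p a (α + β) c = p a α c + p a β c)
    (addr : ∀ a α b c, p a α (b + c) = p a α b + p a α c)
    (assoc : ∀ a α b β c, p (p a α b) β c = p a α (p b β c))
    (tf : ∀ x : M, 2 • x = 0 → x = 0)
    (hA : ∀ a α b β c, p (p a α b) β c = p (p a β b) α c)
    (U : AddSubgroup M)
    (hU : ∀ u ∈ U, ∀ (x : M) (α : G), p u α x - p x α u ∈ U)
    (hsq : ∀ u ∈ U, ∀ α : G, p u α u ∈ U)
    (T : M → M) (hT : ∀ a b : M, T (a + b) = T a + T b)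
    (hTJ : ∀ u ∈ U, ∀ α : G, T (p u α u) = p (T u) α u)
    : ∀ u ∈ U, ∀ v ∈ U, ∀ α β : G,
      T (p (p u α v) β u) = p (p (T u) α v) β u := by
  -- Linearization of hTJ
  have hlin : ∀ u ∈ U, ∀ v ∈ U, ∀ α : G,
      T (p u α v + p v α u) = p (T u) α v + p (T v) α u := by
    intro u hu v hv α
    have h := hTJ (u + v) (U.add_mem hu hv) α
    rw [addl, addr, addr, hT, hT, hT, hTJ u hu, hTJ v hv, hT, addl, addr, addr] at h
    rw [hT]
    have h0 : (p (T u) α u + (T (p u α v) + T (p v α u)) + p (T v) α v)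
        - (p (T u) α u + (p (T u) α v + p (T v) α u) + p (T v) α v) = 0 := by
      rw [sub_eq_zero]
      calc p (T u) α u + (T (p u α v) + T (p v α u)) + p (T v) α v
          = p (T u) α u + T (p u α v) + (T (p v α u) + p (T v) α v) := by abel
        _ = p (T u) α u + p (T u) α v + (p (T v) α u + p (T v) α v) := h
        _ = p (T u) α u + (p (T u) α v + p (T v) α u) + p (T v) α v := by abel
    have h1 : (T (p u α v) + T (p v α u)) - (p (T u) α v + p (T v) α u) = 0 := by
      calc (T (p u α v) + T (p v α u)) - (p (T u) α v + p (T v) α u)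
          = (p (T u) α u + (T (p u α v) + T (p v α u)) + p (T v) α v)
            - (p (T u) α u + (p (T u) α v + p (T v) α u) + p (T v) α v) := by abel
        _ = 0 := h0
    exact sub_eq_zero.1 h1
  intro u hu v hv α β
  have hs : p u α u ∈ U := hsq u hu α
  have hw : p u β v + p v β u ∈ U := by
    have e : p u β v + p v β u
        = p (u + v) β (u + v) - p u β u - p v β v := by
      rw [addl, addr, addr]; abel
    rw [e]
    exact U.sub_mem (U.sub_mem (hsq _ (U.add_mem hu hv) β) (hsq u hu β)) (hsq v hv β)
  have hTw : T (p u β v + p v β u) = p (T u) β v + p (T v) β u := hlin u hu v hv β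
  -- main substitution
  have h1 := hlin u hu _ hw α
  -- rewrite the argument of T on the left side
  have e1 : p u α (p u β v + p v β u) + p (p u β v + p v β u) α u
      = (p (p u α u) β v + p v β (p u α u)) + (p (p u α v) β u + p (p u α v) β u) := by
    rw [addr, addl, ← assoc u α u β v, ← assoc u α v β u, hA u β v α u,
      assoc v β u α u]
    abel
  rw [e1, hT, hlin (p u α u) hs v hv β, hT, hTJ u hu α, hTw, addl, addr,
    ← assoc (T u) α u β v, ← assoc (T u) α v β u, hA (T u) β v α u,
    ← assoc (T v) β u α u] at h1
  -- now h1 is a linear identity; extract 2 • (X - Y) = 0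
  apply sub_eq_zero.1
  apply tf
  have h2 : (2 : ℕ) • (T (p (p u α v) β u) - p (p (T u) α v) β u)
      = (p (p (T u) α u) β v + p (p (T v) β u) α u
          + (T (p (p u α v) β u) + T (p (p u α v) β u)))
        - (p (p (T u) α u) β v + p (p (T u) α v) β u
          + (p (p (T u) α v) β u + p (p (T v) β u) α u)) := by
    rw [two_smul]; abel
  rw [h2, h1, sub_self]
end

section
/- Let M be a 2-torsion free Γ-ring satisfying assumption (A), and U a Lie ideal of M with u·α·u ∈ U for all u ∈ U, α ∈ Γ. If T : M → M is an additive map with T(u·α·u) = T(u)·α·u for all u ∈ U, α ∈ Γ, then T(uαvβw + wβvαu) = T(u)αvβw + T(w)βvαu for all u, v, w ∈ U and α, β ∈ Γ. -/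
theorem stmt2
    {M G : Type*} [AddCommGroup M] [AddCommGroup G]
    (p : M → G → M → M)
    (addl : ∀ a b α c, p (a + b) α c = p a α c + p b α c)
    (addm : ∀ a α β c, p a (α + β) c = p a α c + p a β c)
    (addr : ∀ a α b c, p a α (b + c) = p a α b + p a α c)
    (assoc : ∀ a α b β c, p (p a α b) β c = p a α (p b β c))
    (tf : ∀ x : M, 2 • x = 0 → x = 0)
    (hA : ∀ a α b β c, p (p a α b) β c = p (p a β b) α c)
    (U : AddSubgroup M)
    (hU : ∀ u ∈ U, ∀ (x : M) (α : G), p u α x - p x α u ∈ U)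
    (hsq : ∀ u ∈ U, ∀ α : G, p u α u ∈ U)
    (T : M → M) (hT : ∀ a b : M, T (a + b) = T a + T b)
    (hTJ : ∀ u ∈ U, ∀ α : G, T (p u α u) = p (T u) α u)
    : ∀ u ∈ U, ∀ v ∈ U, ∀ w ∈ U, ∀ α β : G,
      T (p (p u α v) β w + p (p w β v) α u) = p (p (T u) α v) β w + p (p (T w) β v) α u := by
  -- Linearized form of hTJ
  have star : ∀ a ∈ U, ∀ b ∈ U, ∀ γ : G,
      T (p a γ b + p b γ a) = p (T a) γ b + p (T b) γ a := by
    intro a ha b hb γ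
    have h1 := hTJ (a + b) (U.add_mem ha hb) γ
    rw [addl, addr, addr, hT, hT, hT, hTJ a ha γ, hTJ b hb γ, hT, addl, addr, addr] at h1
    have h0 : T (p a γ b + p b γ a) - (p (T a) γ b + p (T b) γ a) = 0 := by
      have h0' := sub_eq_zero.mpr h1
      rw [← h0']
      rw [hT]
      abel
    exact sub_eq_zero.mp h0
  -- uγv + vγu ∈ U
  have hUU : ∀ u ∈ U, ∀ v ∈ U, ∀ γ : G, p u γ v + p v γ u ∈ U := by
    intro u hu v hv γ
    have h1 := hsq (u + v) (U.add_mem hu hv) γ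
    rw [addl, addr, addr] at h1
    have : p u γ v + p v γ u
        = (p u γ u + p u γ v + (p v γ u + p v γ v)) - p u γ u - p v γ v := by abel
    rw [this]
    exact U.sub_mem (U.sub_mem h1 (hsq u hu γ)) (hsq v hv γ)
  -- two-variable lemma
  have lem : ∀ u ∈ U, ∀ v ∈ U, ∀ α β : G,
      T (p (p u α v) β u) = p (p (T u) α v) β u := by
    intro u hu v hv α β
    have hb : p u α v + p v α u ∈ U := hUU u hu v hv α
    have h1 := star u hu _ hb β
    have h3 := star u hu v hv α
    have h2 := star (p u α u) (hsq u hu α) v hv β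
    rw [hTJ u hu α] at h2
    -- rewrite the argument of T in h1
    have e1 : p u β (p u α v + p v α u) + p (p u α v + p v α u) β u
        = (p (p u α u) β v + p v β (p u α u))
          + (p (p u α v) β u + p (p u α v) β u) := by
      rw [addr, addl, ← assoc u β u α v, ← assoc u β v α u, hA u β u α v, hA u β v α u,
        ← assoc v β u α u, hA v β u α u]
      abel
    rw [e1, hT] at h1
    rw [h2] at h1
    rw [hT, h3] at h1
    -- now simplify the right side of h1 using assoc and hA
    rw [addr, addl, ← assoc (T u) β u α v, hA (T u) β u α v,
      ← assoc (T u) β v α u, hA (T u) β v α u,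
      ← assoc (T v) β u α u, hA (T v) β u α u] at h1
    have h0 : (T (p (p u α v) β u) - p (p (T u) α v) β u)
        + (T (p (p u α v) β u) - p (p (T u) α v) β u) = 0 := by
      have h0' := sub_eq_zero.mpr h1
      rw [← h0']
      abel
    have h4 := tf (T (p (p u α v) β u) - p (p (T u) α v) β u)
      (by rw [two_smul]; exact h0)
    exact sub_eq_zero.mp h4
  -- main linearization
  intro u hu v hv w hw α β
  rw [hA w β v α u, hA (T w) β v α u]
  have h := lem (u + w) (U.add_mem hu hw) v hv α β
  simp only [hT, addl, addr] at h
  rw [lem u hu v hv α β, lem w hw v hv α β] at h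
  have h0 : T (p (p u α v) β w + p (p w α v) β u)
      - (p (p (T u) α v) β w + p (p (T w) α v) β u) = 0 := by
    have h0' := sub_eq_zero.mpr h
    rw [← h0', hT]
    abel
  exact sub_eq_zero.mp h0
end

section
/- Let M be a 2-torsion free semiprime Γ-ring satisfying assumption (A), and U a Lie ideal with u·α·u ∈ U for all u ∈ U, α ∈ Γ. If T : M → M is additive with T(u·α·u) = T(u)·α·u for all u ∈ U, α ∈ Γ, and B_α(u,v) := T(uαv) − T(u)αv, then B_α(u,v) β w γ [u,v]_δ = 0 for all u, v, w ∈ U and α, β, γ, δ ∈ Γ. -/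
theorem stmt3
    {M G : Type*} [AddCommGroup M] [AddCommGroup G]
    (p : M → G → M → M)
    (addl : ∀ a b α c, p (a + b) α c = p a α c + p b α c)
    (addm : ∀ a α β c, p a (α + β) c = p a α c + p a β c)
    (addr : ∀ a α b c, p a α (b + c) = p a α b + p a α c)
    (assoc : ∀ a α b β c, p (p a α b) β c = p a α (p b β c))
    (tf : ∀ x : M, 2 • x = 0 → x = 0)
    (hA : ∀ a α b β c, p (p a α b) β c = p (p a β b) α c)
    (semiprime : ∀ a : M, (∀ (x : M) (γ δ : G), p (p a γ x) δ a = 0) → a = 0)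
    (U : AddSubgroup M)
    (hU : ∀ u ∈ U, ∀ (x : M) (α : G), p u α x - p x α u ∈ U)
    (hsq : ∀ u ∈ U, ∀ α : G, p u α u ∈ U)
    (T : M → M) (hT : ∀ a b : M, T (a + b) = T a + T b)
    (hTJ : ∀ u ∈ U, ∀ α : G, T (p u α u) = p (T u) α u)
    : ∀ u ∈ U, ∀ v ∈ U, ∀ w ∈ U, ∀ α β γ δ : G,
      p (p (T (p u α v) - p (T u) α v) β w) γ (p u δ v - p v δ u) = 0 := by
  -- ## basic additive facts
  have p0l : ∀ α c, p 0 α c = 0 := by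
    intro α c
    have h := addl 0 0 α c
    rw [zero_add] at h
    have := add_eq_left.mp h.symm
    exact this
  have p0r : ∀ a α, p a α 0 = 0 := by
    intro a α
    have h := addr a α 0 0
    rw [zero_add] at h
    exact add_eq_left.mp h.symm
  have psubl : ∀ a b α c, p (a - b) α c = p a α c - p b α c := by
    intro a b α c
    have h := addl (a - b) b α c
    rw [sub_add_cancel] at h
    exact eq_sub_of_add_eq h.symm
  have psubr : ∀ a α b c, p a α (b - c) = p a α b - p a α c := by
    intro a α b c
    have h := addr a α (b - c) c
    rw [sub_add_cancel] at h
    exact eq_sub_of_add_eq h.symm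
  have T0 : T 0 = 0 := by
    have h := hT 0 0
    rw [zero_add] at h
    exact add_eq_left.mp h.symm
  have Tsub : ∀ a b, T (a - b) = T a - T b := by
    intro a b
    have h := hT (a - b) b
    rw [sub_add_cancel] at h
    exact eq_sub_of_add_eq h.symm
  have p2l : ∀ a α c, p ((2:ℕ) • a) α c = (2:ℕ) • p a α c := by
    intro a α c
    rw [two_smul, two_smul]
    exact addl a a α c
  have p2r : ∀ a α c, p a α ((2:ℕ) • c) = (2:ℕ) • p a α c := by
    intro a α c
    rw [two_smul, two_smul]
    exact addr a α c c
  have T2 : ∀ a, T ((2:ℕ) • a) = (2:ℕ) • T a := by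
    intro a
    rw [two_smul, two_smul]
    exact hT a a
  have ppl : ∀ (k : ℕ) a α c, p ((2^k : ℕ) • a) α c = (2^k : ℕ) • p a α c := by
    intro k
    induction k with
    | zero => intro a α c; simp
    | succ n ih =>
      intro a α c
      have e : ((2:ℕ)^(n+1)) • a = (2^n : ℕ) • ((2:ℕ) • a) := by
        rw [← mul_smul, pow_succ]
      rw [e, ih, p2l, ← mul_smul, pow_succ]
  have ppr : ∀ (k : ℕ) a α c, p a α ((2^k : ℕ) • c) = (2^k : ℕ) • p a α c := by
    intro k
    induction k with
    | zero => intro a α c; simp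
    | succ n ih =>
      intro a α c
      have e : ((2:ℕ)^(n+1)) • c = (2^n : ℕ) • ((2:ℕ) • c) := by
        rw [← mul_smul, pow_succ]
      rw [e, ih, p2r, ← mul_smul, pow_succ]
  have Tp : ∀ (k : ℕ) a, T ((2^k : ℕ) • a) = (2^k : ℕ) • T a := by
    intro k
    induction k with
    | zero => intro a; simp
    | succ n ih =>
      intro a
      have e : ((2:ℕ)^(n+1)) • a = (2^n : ℕ) • ((2:ℕ) • a) := by
        rw [← mul_smul, pow_succ]
      rw [e, ih, T2, ← mul_smul, pow_succ]
  have tfp : ∀ (k : ℕ) (x : M), (2^k : ℕ) • x = 0 → x = 0 := by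
    intro k
    induction k with
    | zero => intro x h; simpa using h
    | succ n ih =>
      intro x h
      have e : ((2:ℕ)^(n+1)) • x = (2^n : ℕ) • ((2:ℕ) • x) := by
        rw [← mul_smul, pow_succ]
      rw [e] at h
      exact tf x (ih _ h)
  have cancel : ∀ (k : ℕ) (x y : M), (2^k : ℕ) • x = (2^k : ℕ) • y → x = y := by
    intro k x y h
    have : (2^k : ℕ) • (x - y) = 0 := by rw [smul_sub, h, sub_self]
    have := tfp k _ this
    exact sub_eq_zero.mp this
  -- ## the 2-divisible closure V of U
  set VP : M → Prop := fun m => ∃ k : ℕ, (2^k : ℕ) • m ∈ U with hVP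
  have hVU : ∀ {x : M}, x ∈ U → VP x := by
    intro x hx; exact ⟨0, by simpa using hx⟩
  have hVadd : ∀ {x y : M}, VP x → VP y → VP (x + y) := by
    rintro x y ⟨j, hj⟩ ⟨k, hk⟩
    refine ⟨j + k, ?_⟩
    have e : ((2:ℕ)^(j+k)) • (x + y) = (2^k : ℕ) • ((2^j : ℕ) • x) + (2^j : ℕ) • ((2^k : ℕ) • y) := by
      rw [smul_add, ← mul_smul, ← mul_smul, ← pow_add, ← pow_add, add_comm k j]
    rw [e]
    exact U.add_mem (AddSubgroup.nsmul_mem U hj _) (AddSubgroup.nsmul_mem U hk _)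
  have hVneg : ∀ {x : M}, VP x → VP (-x) := by
    rintro x ⟨j, hj⟩
    exact ⟨j, by rw [smul_neg]; exact U.neg_mem hj⟩
  have hVsub : ∀ {x y : M}, VP x → VP y → VP (x - y) := by
    intro x y hx hy
    rw [sub_eq_add_neg]; exact hVadd hx (hVneg hy)
  -- symmetric products of U-elements are in U
  have hsymU : ∀ {a b : M}, a ∈ U → b ∈ U → ∀ α, p a α b + p b α a ∈ U := by
    intro a b ha hb α
    have e : p a α b + p b α a = p (a+b) α (a+b) - p a α a - p b α b := by
      rw [addl, addr, addr]; abel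
    rw [e]
    exact AddSubgroup.sub_mem U (AddSubgroup.sub_mem U (hsq _ (U.add_mem ha hb) α) (hsq a ha α)) (hsq b hb α)
  have htwoU : ∀ {a b : M}, a ∈ U → b ∈ U → ∀ α, (2:ℕ) • (p a α b) ∈ U := by
    intro a b ha hb α
    have e : (2:ℕ) • (p a α b) = (p a α b + p b α a) + (p a α b - p b α a) := by
      rw [two_smul]; abel
    rw [e]
    exact U.add_mem (hsymU ha hb α) (hU a ha b α)
  have hVmul : ∀ {a b : M}, VP a → VP b → ∀ α, VP (p a α b) := by
    rintro a b ⟨j, hj⟩ ⟨k, hk⟩ α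
    refine ⟨j + k + 1, ?_⟩
    have e : ((2:ℕ)^(j+k+1)) • (p a α b) = (2:ℕ) • p ((2^j : ℕ) • a) α ((2^k : ℕ) • b) := by
      rw [ppl, ppr, ← mul_smul, ← mul_smul]
      congr 1
      ring
    rw [e]
    exact htwoU hj hk α
  have hVbrk : ∀ {a : M}, VP a → ∀ (x : M) α, VP (p a α x - p x α a) := by
    rintro a ⟨j, hj⟩ x α
    refine ⟨j, ?_⟩
    have e : ((2:ℕ)^j) • (p a α x - p x α a) = p ((2^j : ℕ) • a) α x - p x α ((2^j : ℕ) • a) := by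
      rw [smul_sub, ppl, ppr]
    rw [e]
    exact hU _ hj x α
  -- hTJ extended to V
  have hTJV : ∀ {a : M}, VP a → ∀ α, T (p a α a) = p (T a) α a := by
    rintro a ⟨k, hk⟩ α
    have h := hTJ _ hk α
    have e1 : p ((2^k : ℕ) • a) α ((2^k : ℕ) • a) = (2^k : ℕ) • ((2^k : ℕ) • p a α a) := by
      rw [ppl, ppr]
    have e2 : p (T ((2^k : ℕ) • a)) α ((2^k : ℕ) • a) = (2^k : ℕ) • ((2^k : ℕ) • p (T a) α a) := by
      rw [Tp, ppl, ppr]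
    rw [e1, e2, Tp, Tp] at h
    exact cancel k _ _ (cancel k _ _ h)
  have sub_helper : ∀ (x r A B : M), A = B → x - r = A - B → x = r := by
    intro x r A B hab he
    rw [hab, sub_self] at he
    exact sub_eq_zero.mp he
  -- step1 : the basic polarized identity on V
  have step1 : ∀ {a b : M}, VP a → VP b → ∀ α,
      T (p a α b + p b α a) = p (T a) α b + p (T b) α a := by
    intro a b ha hb α
    have h := hTJV (hVadd ha hb) α
    have e1 : p (a+b) α (a+b) = p a α a + (p a α b + p b α a) + p b α b := by
      rw [addl, addr, addr]; abel
    rw [e1, hT, hT, hT, hTJV ha α, hTJV hb α, hT a b, addl, addr, addr] at h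
    rw [hT]
    refine sub_helper _ _ _ _ h ?_
    abel
  have cancel2 : ∀ (x y : M), (2:ℕ) • x = (2:ℕ) • y → x = y := by
    intro x y h
    have : (2:ℕ) • (x - y) = 0 := by rw [smul_sub, h, sub_self]
    exact sub_eq_zero.mp (tf _ this)
  -- S2two
  have S2two : ∀ {u m : M}, VP u → VP m → ∀ α β,
      T (p (p u α m) β u + p (p u β m) α u)
        = p (p (T u) α m) β u + p (p (T u) β m) α u := by
    intro u m hu hm α β
    have h1 := step1 (hVadd (hVmul hu hm α) (hVmul hm hu α)) hu β
    rw [addl, addr, assoc m α u β u, ← assoc u β u α m, ← assoc u β m α u,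
        step1 hu hm α, addl, addr, ← assoc (T u) β u α m, ← assoc (T u) β m α u,
        assoc (T m) α u β u] at h1
    have h2 := step1 hm (hVmul hu hu β) α
    rw [hTJV hu β] at h2
    have e : p (p u α m) β u + p m α (p u β u) + (p (p u β u) α m + p (p u β m) α u)
        = (p m α (p u β u) + p (p u β u) α m)
          + (p (p u α m) β u + p (p u β m) α u) := by abel
    rw [e, hT, h2] at h1
    refine sub_helper _ _ _ _ h1 ?_
    abel
  -- S2
  have S2 : ∀ {u m : M}, VP u → VP m → ∀ α β,
      T (p (p u α m) β u) = p (p (T u) α m) β u := by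
    intro u m hu hm α β
    have h := S2two hu hm α β
    rw [← hA u α m β u, ← hA (T u) α m β u] at h
    have e1 : p (p u α m) β u + p (p u α m) β u = (2:ℕ) • p (p u α m) β u := by
      rw [two_smul]
    have e2 : p (p (T u) α m) β u + p (p (T u) α m) β u = (2:ℕ) • p (p (T u) α m) β u := by
      rw [two_smul]
    rw [e1, e2, T2] at h
    exact cancel2 _ _ h
  -- polarized S2
  have L3 : ∀ {a b m : M}, VP a → VP b → VP m → ∀ α β,
      T (p (p a α m) β b + p (p b α m) β a)
        = p (p (T a) α m) β b + p (p (T b) α m) β a := by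
    intro a b m ha hb hm α β
    have h := S2 (hVadd ha hb) hm α β
    rw [hT a b, addl a b α m, addl (T a) (T b) α m, addl, addl, addr, addr, addr, addr] at h
    have e : p (p a α m) β a + p (p a α m) β b + (p (p b α m) β a + p (p b α m) β b)
        = p (p a α m) β b + p (p b α m) β a + p (p a α m) β a + p (p b α m) β b := by abel
    rw [e, hT, hT, S2 ha hm α β, S2 hb hm α β] at h
    refine sub_helper _ _ _ _ h ?_
    abel
  -- ## main proof
  intro u hu v hv w hw α β γ δ
  have hu' : VP u := hVU hu
  have hv' : VP v := hVU hv
  have hw' : VP w := hVU hw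
  -- letter permutation helper on left-normalized 5-fold products (swap first/last letter)
  have permTu : ∀ (x y z s t : M) (l1 l2 l3 l4 : G),
      p (p (p (p x l1 y) l2 z) l3 s) l4 t = p (p (p (p x l4 y) l2 z) l3 s) l1 t := by
    intro x y z s t l1 l2 l3 l4
    rw [hA (p (p x l1 y) l2 z) l3 s l4 t]
    rw [hA (p x l1 y) l2 z l4 s]
    rw [hA x l1 y l4 z]
    rw [hA (p x l4 y) l1 z l2 s]
    rw [hA (p (p x l4 y) l2 z) l1 s l3 t]
  -- ### the key lemma (K) : X1 = Y1
  have hm3 : VP (p w γ u) := hVmul hw' hu' γ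
  have P4 := L3 (hVmul hu' hv' α) hv' hm3 β δ
  have P4' := L3 (hVmul hu' hv' δ) hv' hm3 β α
  have eA : p (p (p u α v) β (p w γ u)) δ v = p (p (p u δ v) β (p w γ u)) α v := by
    rw [← assoc (p u α v) β w γ u, ← assoc (p u δ v) β w γ u]
    exact permTu u v w u v α β γ δ
  have eB : p (p v β (p w γ u)) δ (p u α v) = p (p v β (p w γ u)) α (p u δ v) := by
    rw [← assoc (p v β (p w γ u)) δ u α v, ← assoc (p v β (p w γ u)) α u δ v]
    exact hA (p v β (p w γ u)) δ u α v
  have eC : p (p (T v) β (p w γ u)) δ (p u α v) = p (p (T v) β (p w γ u)) α (p u δ v) := by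
    rw [← assoc (p (T v) β (p w γ u)) δ u α v, ← assoc (p (T v) β (p w γ u)) α u δ v]
    exact hA (p (T v) β (p w γ u)) δ u α v
  rw [eA, eB] at P4
  have hK0 := (P4.symm.trans P4')
  rw [eC] at hK0
  have hK1 : p (p (T (p u α v)) β (p w γ u)) δ v = p (p (T (p u δ v)) β (p w γ u)) α v :=
    add_right_cancel hK0
  have eX1 : p (p (T (p u α v)) β w) γ (p u δ v) = p (p (T (p u α v)) β (p w γ u)) δ v := by
    rw [← assoc (p (T (p u α v)) β w) γ u δ v, assoc (T (p u α v)) β w γ u]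
  have eY1 : p (p (T (p u δ v)) β w) γ (p u α v) = p (p (T (p u δ v)) β (p w γ u)) α v := by
    rw [← assoc (p (T (p u δ v)) β w) γ u α v, assoc (T (p u δ v)) β w γ u]
  have hK : p (p (T (p u α v)) β w) γ (p u δ v) = p (p (T (p u δ v)) β w) γ (p u α v) := by
    rw [eX1, eY1]; exact hK1
  -- ### lemma (i) in raw form : X2 + Y2 = V1 + W2
  have regroup1 : ∀ (x : M), p (p (p x α v) β w) γ (p v δ u)
      = p (p x α (p (p v β w) γ v)) δ u := by
    intro x
    rw [assoc x α v β w, assoc x α (p v β w) γ (p v δ u), ← assoc (p v β w) γ v δ u,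
        ← assoc x α (p (p v β w) γ v) δ u]
  have regroup2 : ∀ (x : M), p (p (p x δ u) β w) γ (p u α v)
      = p (p x δ (p (p u β w) γ u)) α v := by
    intro x
    rw [assoc x δ u β w, assoc x δ (p u β w) γ (p u α v), ← assoc (p u β w) γ u α v,
        ← assoc x δ (p (p u β w) γ u) α v]
  have hIraw := L3 (hVmul hu' hv' α) (hVmul hv' hu' δ) hw' β γ
  rw [regroup1 u, regroup2 v, hT,
      S2 hu' (hVmul (hVmul hv' hw' β) hv' γ) α δ,
      S2 hv' (hVmul (hVmul hu' hw' β) hu' γ) δ α,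
      ← regroup1 (T u), ← regroup2 (T v)] at hIraw
  have hI : p (p (T (p u α v)) β w) γ (p v δ u) + p (p (T (p v δ u)) β w) γ (p u α v)
      = p (p (p (T u) α v) β w) γ (p v δ u) + p (p (p (T v) δ u) β w) γ (p u α v) :=
    hIraw.symm
  -- ### step1 consequence : Y1 + Y2 = M1 + M2
  have eT := step1 hu' hv' δ
  rw [hT] at eT
  have hS : p (p (T (p u δ v)) β w) γ (p u α v) + p (p (T (p v δ u)) β w) γ (p u α v)
      = p (p (p (T u) δ v) β w) γ (p u α v) + p (p (p (T v) δ u) β w) γ (p u α v) := by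
    rw [← addl (p (T (p u δ v)) β w) (p (T (p v δ u)) β w) γ (p u α v),
        ← addl (T (p u δ v)) (T (p v δ u)) β w, eT,
        addl (p (T u) δ v) (p (T v) δ u) β w, addl]
  -- ### claim D : M1 = Z1
  have eD : p (p (p (T u) δ v) β w) γ (p u α v) = p (p (p (T u) α v) β w) γ (p u δ v) := by
    rw [← assoc (p (p (T u) δ v) β w) γ u α v, ← assoc (p (p (T u) α v) β w) γ u δ v]
    exact permTu (T u) v w u v δ β γ α
  -- ### final assembly
  rw [psubl, psubl, psubr, psubr]
  have final :
      p (p (T (p u α v)) β w) γ (p u δ v) - p (p (T (p u α v)) β w) γ (p v δ u)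
        - (p (p (p (T u) α v) β w) γ (p u δ v) - p (p (p (T u) α v) β w) γ (p v δ u))
      = (p (p (T (p u α v)) β w) γ (p u δ v) - p (p (T (p u δ v)) β w) γ (p u α v))
        - ((p (p (T (p u α v)) β w) γ (p v δ u) + p (p (T (p v δ u)) β w) γ (p u α v))
            - (p (p (p (T u) α v) β w) γ (p v δ u) + p (p (p (T v) δ u) β w) γ (p u α v)))
        + ((p (p (T (p u δ v)) β w) γ (p u α v) + p (p (T (p v δ u)) β w) γ (p u α v))
            - (p (p (p (T u) δ v) β w) γ (p u α v) + p (p (p (T v) δ u) β w) γ (p u α v)))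
        + (p (p (p (T u) δ v) β w) γ (p u α v) - p (p (p (T u) α v) β w) γ (p u δ v)) := by
    abel
  rw [final, hK, hI, hS, eD]
  simp
end

section
/- Let M be a 2-torsion free prime Γ-ring satisfying assumption (A). If U is a commutative Lie ideal of M (i.e. [u,v]_α = 0 for all u,v ∈ U, α ∈ Γ), then U is contained in the center Z(M) of M. -/
private lemma stmt4_aux {M G : Type*} [AddCommGroup M] [AddCommGroup G]
    (p : M → G → M → M)
    (addl : ∀ a b α c, p (a + b) α c = p a α c + p b α c)
    (addr : ∀ a α b c, p a α (b + c) = p a α b + p a α c)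
    (assoc : ∀ a α b β c, p (p a α b) β c = p a α (p b β c))
    (tf : ∀ x : M, 2 • x = 0 → x = 0)
    (prime : ∀ a b : M, (∀ (x : M) (γ δ : G), p (p a γ x) δ b = 0) → a = 0 ∨ b = 0)
    (d : M → M)
    (dadd : ∀ a b, d (a + b) = d a + d b)
    (leib : ∀ x β y, d (p x β y) = p (d x) β y + p x β (d y))
    (dd : ∀ x, d (d x) = 0) :
    ∀ b, d b = 0 := by
  have subl : ∀ a b β c, p (a - b) β c = p a β c - p b β c := by
    intro a b β c
    have h := addl (a - b) b β c
    rw [sub_add_cancel] at h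
    exact eq_sub_of_add_eq h.symm
  have subr : ∀ a β b c, p a β (b - c) = p a β b - p a β c := by
    intro a β b c
    have h := addr a β (b - c) c
    rw [sub_add_cancel] at h
    exact eq_sub_of_add_eq h.symm
  have pzl : ∀ β c, p 0 β c = 0 := by
    intro β c
    have := subl 0 0 β c; simpa using this
  have pzr : ∀ a β, p a β 0 = 0 := by
    intro a β
    have := subr a β 0 0; simpa using this
  have hzz : ∀ x γ y, p (d x) γ (d y) = 0 := by
    intro x γ y
    apply tf
    have h0 : d (d (p x γ y)) = 0 := dd _
    rw [leib, dadd, leib, leib, dd, dd, pzl, pzr] at h0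
    rw [two_smul]
    calc p (d x) γ (d y) + p (d x) γ (d y)
        = 0 + p (d x) γ (d y) + (p (d x) γ (d y) + 0) := by abel
      _ = 0 := h0
  intro b
  have := prime (d b) (d b) ?_
  · tauto
  intro x γ δ
  have h1 : p x δ (d b) = d (p x δ b) - p (d x) δ b := by rw [leib]; abel
  calc p (p (d b) γ x) δ (d b)
      = p (d b) γ (p x δ (d b)) := assoc _ _ _ _ _
    _ = p (d b) γ (d (p x δ b)) - p (d b) γ (p (d x) δ b) := by rw [h1, subr]
    _ = 0 - p (p (d b) γ (d x)) δ b := by rw [hzz, ← assoc]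
    _ = 0 := by rw [hzz, pzl, sub_zero]

theorem stmt4
    {M G : Type*} [AddCommGroup M] [AddCommGroup G]
    (p : M → G → M → M)
    (addl : ∀ a b α c, p (a + b) α c = p a α c + p b α c)
    (addm : ∀ a α β c, p a (α + β) c = p a α c + p a β c)
    (addr : ∀ a α b c, p a α (b + c) = p a α b + p a α c)
    (assoc : ∀ a α b β c, p (p a α b) β c = p a α (p b β c))
    (tf : ∀ x : M, 2 • x = 0 → x = 0)
    (hA : ∀ a α b β c, p (p a α b) β c = p (p a β b) α c)
    (prime : ∀ a b : M, (∀ (x : M) (γ δ : G), p (p a γ x) δ b = 0) → a = 0 ∨ b = 0)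
    (U : AddSubgroup M)
    (hU : ∀ u ∈ U, ∀ (x : M) (α : G), p u α x - p x α u ∈ U)
    (hcomm : ∀ u ∈ U, ∀ v ∈ U, ∀ α : G, p u α v = p v α u)
    : ∀ u ∈ U, ∀ (b : M) (α : G), p u α b = p b α u := by
  intro u hu b α
  set d : M → M := fun x => p u α x - p x α u with hd
  have dadd : ∀ a c, d (a + c) = d a + d c := by
    intro a c
    simp only [hd, addl, addr]
    abel
  have leib : ∀ x β y, d (p x β y) = p (d x) β y + p x β (d y) := by
    intro x β y
    have subl : ∀ a c β e, p (a - c) β e = p a β e - p c β e := by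
      intro a c β e
      have h := addl (a - c) c β e
      rw [sub_add_cancel] at h
      exact eq_sub_of_add_eq h.symm
    have subr : ∀ a β c e, p a β (c - e) = p a β c - p a β e := by
      intro a β c e
      have h := addr a β (c - e) e
      rw [sub_add_cancel] at h
      exact eq_sub_of_add_eq h.symm
    simp only [hd, subl, subr]
    rw [← assoc u α x β y, show p (p x α u) β y = p x β (p u α y) by
      rw [hA x α u β y, assoc], ← assoc x β y α u]
    abel
  have ddz : ∀ x, d (d x) = 0 := by
    intro x
    have hx : d x ∈ U := hU u hu x α
    simp only [hd]
    rw [sub_eq_zero]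
    exact hcomm u hu _ hx α
  have := stmt4_aux p addl addr assoc tf prime d dadd leib ddz b
  simp only [hd] at this
  exact sub_eq_zero.mp this
end

section
/- Let M be a 2-torsion free semiprime Γ-ring satisfying assumption (A). If U is a commutative Lie ideal of M (i.e. [u,v]_α = 0 for all u,v ∈ U, α ∈ Γ), then U ⊆ Z(M). -/
theorem stmt5
    {M G : Type*} [AddCommGroup M] [AddCommGroup G]
    (p : M → G → M → M)
    (addl : ∀ a b α c, p (a + b) α c = p a α c + p b α c)
    (addm : ∀ a α β c, p a (α + β) c = p a α c + p a β c)
    (addr : ∀ a α b c, p a α (b + c) = p a α b + p a α c)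
    (assoc : ∀ a α b β c, p (p a α b) β c = p a α (p b β c))
    (tf : ∀ x : M, 2 • x = 0 → x = 0)
    (hA : ∀ a α b β c, p (p a α b) β c = p (p a β b) α c)
    (semiprime : ∀ a : M, (∀ (x : M) (γ δ : G), p (p a γ x) δ a = 0) → a = 0)
    (U : AddSubgroup M)
    (hU : ∀ u ∈ U, ∀ (x : M) (α : G), p u α x - p x α u ∈ U)
    (hcomm : ∀ u ∈ U, ∀ v ∈ U, ∀ α : G, p u α v = p v α u)
    : ∀ u ∈ U, ∀ (b : M) (α : G), p u α b = p b α u := by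
  intro u hu b α
  -- subtraction / zero lemmas
  have subl : ∀ a b' α' c, p (a - b') α' c = p a α' c - p b' α' c := by
    intro a b' α' c
    have h := addl (a - b') b' α' c
    rw [sub_add_cancel] at h
    exact eq_sub_of_add_eq h.symm
  have subr : ∀ a α' b' c, p a α' (b' - c) = p a α' b' - p a α' c := by
    intro a α' b' c
    have h := addr a α' (b' - c) c
    rw [sub_add_cancel] at h
    exact eq_sub_of_add_eq h.symm
  have pl0 : ∀ α' c, p 0 α' c = 0 := by
    intro α' c
    have h := addl 0 0 α' c
    rw [add_zero] at h
    exact (left_eq_add.mp h)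
  have pr0 : ∀ a α', p a α' 0 = 0 := by
    intro a α'
    have h := addr a α' 0 0
    rw [add_zero] at h
    exact (left_eq_add.mp h)
  -- the derivation d
  set d : G → M → M := fun β x => p u β x - p x β u with hd
  have hdU : ∀ x β, d β x ∈ U := fun x β => hU u hu x β
  have hdd : ∀ x α' β, d β (d α' x) = 0 := by
    intro x α' β
    have := hcomm u hu (d α' x) (hdU x α') β
    simp only [hd]
    rw [this]
    abel
  have dadd : ∀ β x y, d β (x + y) = d β x + d β y := by
    intro β x y
    simp only [hd, addl, addr]
    abel
  have rule : ∀ β γ x y, d β (p x γ y) = p (d β x) γ y + p x γ (d β y) := by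
    intro β γ x y
    simp only [hd, subl, subr]
    rw [← assoc x γ u β y, hA x γ u β y, assoc u β x γ y, assoc x γ y β u]
    abel
  have key : ∀ x y γ, p (d α x) γ (d α y) = 0 := by
    intro x y γ
    have h0 : d α (d α (p x γ y)) = 0 := hdd _ _ _
    rw [rule α γ x y, dadd, rule, rule, hdd, hdd, pl0, pr0] at h0
    have h2 : (2 : ℕ) • p (d α x) γ (d α y) = 0 := by
      rw [two_nsmul]
      rw [zero_add, add_zero] at h0
      exact h0
    exact tf _ h2
  have key2 : ∀ x y z γ δ, p (p (d α x) γ y) δ (d α z) = 0 := by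
    intro x y z γ δ
    have h0 := key x (p y δ z) γ
    rw [rule α δ y z, addr, ← assoc, key, pl0, zero_add, ← assoc] at h0
    exact h0
  have hz : d α b = 0 := semiprime _ (fun x γ δ => key2 b x b γ δ)
  have : p u α b - p b α u = 0 := hz
  exact sub_eq_zero.mp this
end

section
/- Let M be a 2-torsion free Γ-ring satisfying assumption (A) and U a Lie ideal of M. Then T(U) := {x ∈ M : [x,m]_α ∈ U for all m ∈ M, α ∈ Γ} is both closed under the Γ-ring product (x,y ∈ T(U) implies xαy ∈ T(U) for all α ∈ Γ) and a Lie ideal of M, and U ⊆ T(U). -/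
theorem stmt6
    {M G : Type*} [AddCommGroup M] [AddCommGroup G]
    (p : M → G → M → M)
    (addl : ∀ a b α c, p (a + b) α c = p a α c + p b α c)
    (addm : ∀ a α β c, p a (α + β) c = p a α c + p a β c)
    (addr : ∀ a α b c, p a α (b + c) = p a α b + p a α c)
    (assoc : ∀ a α b β c, p (p a α b) β c = p a α (p b β c))
    (tf : ∀ x : M, 2 • x = 0 → x = 0)
    (hA : ∀ a α b β c, p (p a α b) β c = p (p a β b) α c)
    (U : AddSubgroup M)
    (hU : ∀ u ∈ U, ∀ (x : M) (α : G), p u α x - p x α u ∈ U)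
    (TU : Set M) (hTU : TU = {x : M | ∀ (m : M) (α : G), p x α m - p m α x ∈ U})
    : (∀ x ∈ TU, ∀ y ∈ TU, ∀ α : G, p x α y ∈ TU) ∧
      (0 : M) ∈ TU ∧
      (∀ x ∈ TU, ∀ y ∈ TU, x + y ∈ TU) ∧
      (∀ x ∈ TU, -x ∈ TU) ∧
      (∀ x ∈ TU, ∀ (m : M) (α : G), p x α m - p m α x ∈ TU) ∧
      (∀ u ∈ U, u ∈ TU) := by
  subst hTU
  have pl0 : ∀ α m, p 0 α m = 0 := by
    intro α m
    have h := addl 0 0 α m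
    rw [zero_add] at h
    exact left_eq_add.mp h
  have pr0 : ∀ α m, p m α (0 : M) = 0 := by
    intro α m
    have h := addr m α 0 0
    rw [zero_add] at h
    exact left_eq_add.mp h
  have pln : ∀ (x : M) α m, p (-x) α m = -(p x α m) := by
    intro x α m
    have h := addl (-x) x α m
    rw [neg_add_cancel, pl0] at h
    exact eq_neg_of_add_eq_zero_left h.symm
  have prn : ∀ (x : M) α m, p m α (-x) = -(p m α x) := by
    intro x α m
    have h := addr m α (-x) x
    rw [neg_add_cancel, pr0] at h
    exact eq_neg_of_add_eq_zero_left h.symm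
  refine ⟨?_, ?_, ?_, ?_, ?_, ?_⟩
  · -- product closure
    intro x hx y hy α m β
    have e1 : p (p x α y) β m = p x α (p y β m) := assoc x α y β m
    have e2 : p m β (p x α y) = p (p m β x) α y := (assoc m β x α y).symm
    have e3 : p (p y β m) α x = p y α (p m β x) := by
      rw [← assoc y α m β x, hA, assoc]
    have key : p (p x α y) β m - p m β (p x α y)
        = (p x α (p y β m) - p (p y β m) α x) + (p y α (p m β x) - p (p m β x) α y) := by
      rw [e1, e2, e3]; abel
    rw [key]
    exact U.add_mem (hx (p y β m) α) (hy (p m β x) α)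
  · intro m α
    simpa [pl0, pr0] using U.zero_mem
  · intro x hx y hy m α
    have key : p (x + y) α m - p m α (x + y)
        = (p x α m - p m α x) + (p y α m - p m α y) := by
      rw [addl, addr]; abel
    rw [key]
    exact U.add_mem (hx m α) (hy m α)
  · intro x hx m α
    have key : p (-x) α m - p m α (-x) = -(p x α m - p m α x) := by
      rw [pln, prn]; abel
    rw [key]
    exact U.neg_mem (hx m α)
  · intro x hx m α n β
    exact hU _ (hx m α) n β
  · intro u hu m α
    exact hU u hu m α
end

section
/- Let M be a 2-torsion free semiprime Γ-ring satisfying assumption (A), U a Lie ideal of M with U ⊄ Z(M), and a ∈ U. If aαuβa = 0 for all u ∈ U and all α, β ∈ Γ, then aαa = 0 for all α ∈ Γ. -/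
theorem stmt7
    {M G : Type*} [AddCommGroup M] [AddCommGroup G]
    (p : M → G → M → M)
    (addl : ∀ a b α c, p (a + b) α c = p a α c + p b α c)
    (addm : ∀ a α β c, p a (α + β) c = p a α c + p a β c)
    (addr : ∀ a α b c, p a α (b + c) = p a α b + p a α c)
    (assoc : ∀ a α b β c, p (p a α b) β c = p a α (p b β c))
    (tf : ∀ x : M, 2 • x = 0 → x = 0)
    (hA : ∀ a α b β c, p (p a α b) β c = p (p a β b) α c)
    (semiprime : ∀ a : M, (∀ (x : M) (γ δ : G), p (p a γ x) δ a = 0) → a = 0)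
    (U : AddSubgroup M)
    (hU : ∀ u ∈ U, ∀ (x : M) (α : G), p u α x - p x α u ∈ U)
    (hnc : ¬ ∀ u ∈ U, ∀ (b : M) (α : G), p u α b = p b α u)
    (a : M) (haU : a ∈ U)
    (ha : ∀ u ∈ U, ∀ α β : G, p (p a α u) β a = 0)
    : ∀ α : G, p a α a = 0 := by
  intro α
  have hzr : ∀ (x : M) (γ : G), p x γ (0 : M) = 0 := by
    intro x γ
    have h := addr x γ 0 0
    simpa using h.symm
  have subl : ∀ (b c : M) (γ : G) (d : M), p (b - c) γ d = p b γ d - p c γ d := by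
    intro b c γ d
    have h := addl (b - c) c γ d
    rw [sub_add_cancel] at h
    exact eq_sub_of_add_eq h.symm
  have subr : ∀ (d : M) (γ : G) (b c : M), p d γ (b - c) = p d γ b - p d γ c := by
    intro d γ b c
    have h := addr d γ (b - c) c
    rw [sub_add_cancel] at h
    exact eq_sub_of_add_eq h.symm
  have key : ∀ (x : M) (γ δ : G),
      p (p a α (p a γ x)) δ a = p (p a α (p x γ a)) δ a := by
    intro x γ δ
    have hu := ha _ (hU a haU x γ) α δ
    rw [subr a α (p a γ x) (p x γ a), subl] at hu
    exact sub_eq_zero.mp hu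
  have main : ∀ (x : M) (γ δ : G),
      p (p (p a α a) γ x) δ (p a α a) = 0 := by
    intro x γ δ
    rw [assoc a α a γ x, ← assoc _ δ a α a, key x γ δ, ← assoc a α x γ a,
      assoc (p a α x) γ a δ a, assoc (p a α x) γ (p a δ a) α a,
      ha a haU δ α, hzr]
  exact semiprime _ main
end

section
/- Let M be a 2-torsion free semiprime Γ-ring satisfying assumption (A) and U a Lie ideal of M with U ⊄ Z(M). If a ∈ U satisfies aαuβa = 0 for all u ∈ U and all α, β ∈ Γ, then a = 0. -/
theorem stmt8
    {M G : Type*} [AddCommGroup M] [AddCommGroup G]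
    (p : M → G → M → M)
    (addl : ∀ a b α c, p (a + b) α c = p a α c + p b α c)
    (addm : ∀ a α β c, p a (α + β) c = p a α c + p a β c)
    (addr : ∀ a α b c, p a α (b + c) = p a α b + p a α c)
    (assoc : ∀ a α b β c, p (p a α b) β c = p a α (p b β c))
    (tf : ∀ x : M, 2 • x = 0 → x = 0)
    (hA : ∀ a α b β c, p (p a α b) β c = p (p a β b) α c)
    (semiprime : ∀ a : M, (∀ (x : M) (γ δ : G), p (p a γ x) δ a = 0) → a = 0)
    (U : AddSubgroup M)
    (hU : ∀ u ∈ U, ∀ (x : M) (α : G), p u α x - p x α u ∈ U)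
    (hnc : ¬ ∀ u ∈ U, ∀ (b : M) (α : G), p u α b = p b α u)
    (a : M) (haU : a ∈ U)
    (ha : ∀ u ∈ U, ∀ α β : G, p (p a α u) β a = 0)
    : a = 0 := by
  -- basic triadditivity consequences
  have pz1 : ∀ (α : G) (c : M), p 0 α c = 0 := by
    intro α c
    have h := addl 0 0 α c
    rw [add_zero] at h
    exact (left_eq_add.mp h)
  have pz3 : ∀ (x : M) (α : G), p x α 0 = 0 := by
    intro x α
    have h := addr x α 0 0
    rw [add_zero] at h
    exact (left_eq_add.mp h)
  have subl : ∀ (x y : M) (α : G) (c : M), p (x - y) α c = p x α c - p y α c := by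
    intro x y α c
    have h := addl (x - y) y α c
    rw [sub_add_cancel] at h
    exact eq_sub_of_add_eq h.symm
  have subr : ∀ (x : M) (α : G) (b c : M), p x α (b - c) = p x α b - p x α c := by
    intro x α b c
    have h := addr x α (b - c) c
    rw [sub_add_cancel] at h
    exact eq_sub_of_add_eq h.symm
  have hA' : ∀ (x : M) (α : G) (y : M) (β : G) (z : M),
      p x α (p y β z) = p x β (p y α z) := by
    intro x α y β z
    rw [← assoc, hA, assoc]
  -- step 2 : a u z a = a z u a for u ∈ U, z ∈ M
  have step2 : ∀ u ∈ U, ∀ (z : M) (α γ β : G),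
      p a α (p u γ (p z β a)) = p a α (p z γ (p u β a)) := by
    intro u hu z α γ β
    have h := ha _ (hU u hu z γ) α β
    rw [subr, subl, sub_eq_zero] at h
    simpa only [assoc] using h
  -- step 4' : a a x u a = 0 for u ∈ U
  have step4' : ∀ u ∈ U, ∀ (x : M) (α δ γ β : G),
      p a α (p a δ (p x γ (p u β a))) = 0 := by
    intro u hu x α δ γ β
    have h := step2 u hu (p a δ x) α γ β
    simp only [assoc] at h
    have hz : p a α (p u γ (p a δ (p x β a))) = 0 := by
      have h0 : p (p (p (p a α u) γ a) δ x) β a = 0 := by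
        rw [ha u hu α γ, pz1, pz1]
      simpa only [assoc] using h0
    rw [hz] at h
    exact h.symm
  -- step 7 : a α a = 0
  have step7 : ∀ α : G, p a α a = 0 := by
    intro α
    apply semiprime
    intro x γ δ
    have h := step4' a haU x α γ δ α
    calc p (p (p a α a) γ x) δ (p a α a)
        = p a α (p a γ (p x δ (p a α a))) := by simp only [assoc]
      _ = 0 := h
  have killaa : ∀ (α γ : G) (x : M), p a α (p a γ x) = 0 := by
    intro α γ x
    rw [← assoc, step7, pz1]
  -- step 9
  have step9 : ∀ (w z : M) (α γ δ β : G),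
      p a α (p w γ (p a δ (p z β a))) = - p a α (p z δ (p a γ (p w β a))) := by
    intro w z α γ δ β
    have h := step2 _ (hU a haU w γ) z α δ β
    simp only [subl, subr, assoc] at h
    rw [killaa, step7, pz3, pz3, pz3] at h
    rw [zero_sub, sub_zero] at h
    exact neg_eq_iff_eq_neg.mp h
  -- step sq : a w a w a = 0
  have step_sq : ∀ (w : M) (α γ δ β : G),
      p a α (p w γ (p a δ (p w β a))) = 0 := by
    intro w α γ δ β
    have h := step9 w w α γ δ β
    rw [hA' w δ a γ] at h
    apply tf
    rw [two_nsmul]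
    nth_rewrite 1 [h]
    abel
  -- final : a w a = 0
  have final : ∀ (α : G) (w : M) (β : G), p (p a α w) β a = 0 := by
    intro α w β
    apply semiprime
    intro x γ δ
    simp only [assoc]
    have t1 : p x δ (p a α (p w β a)) = p (p (p x δ a) α w) β a := by
      simp only [assoc]
    rw [t1]
    rw [step9 w (p (p x δ a) α w) α β γ β]
    simp only [assoc, neg_eq_zero]
    rw [step_sq w α γ β β, pz3, pz3]
  apply semiprime
  intro x γ δ
  exact final γ x δ
end

section
/- Let M be a 2-torsion free semiprime Γ-ring satisfying assumption (A) and U a Lie ideal of M with U ⊄ Z(M). If a ∈ U satisfies aαu = 0 for all u ∈ U and α ∈ Γ, then a = 0. Likewise if uαa = 0 for all u ∈ U and α ∈ Γ, then a = 0. -/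
theorem stmt9
    {M G : Type*} [AddCommGroup M] [AddCommGroup G]
    (p : M → G → M → M)
    (addl : ∀ a b α c, p (a + b) α c = p a α c + p b α c)
    (addm : ∀ a α β c, p a (α + β) c = p a α c + p a β c)
    (addr : ∀ a α b c, p a α (b + c) = p a α b + p a α c)
    (assoc : ∀ a α b β c, p (p a α b) β c = p a α (p b β c))
    (tf : ∀ x : M, 2 • x = 0 → x = 0)
    (hA : ∀ a α b β c, p (p a α b) β c = p (p a β b) α c)
    (semiprime : ∀ a : M, (∀ (x : M) (γ δ : G), p (p a γ x) δ a = 0) → a = 0)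
    (U : AddSubgroup M)
    (hU : ∀ u ∈ U, ∀ (x : M) (α : G), p u α x - p x α u ∈ U)
    (hnc : ¬ ∀ u ∈ U, ∀ (b : M) (α : G), p u α b = p b α u)
    (a : M) (haU : a ∈ U)
    : ((∀ u ∈ U, ∀ α : G, p a α u = 0) → a = 0) ∧
      ((∀ u ∈ U, ∀ α : G, p u α a = 0) → a = 0) := by
  have zl : ∀ (α : G) (c : M), p 0 α c = 0 := by
    intro α c
    have := addl 0 0 α c
    simpa using this.symm
  have zr : ∀ (x : M) (α : G), p x α 0 = 0 := by
    intro x α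
    have := addr x α 0 0
    simpa using this.symm
  have subr : ∀ (x : M) (α : G) (b c : M), p x α (b - c) = p x α b - p x α c := by
    intro x α b c
    have h := addr x α (b - c) c
    rw [sub_add_cancel] at h
    rw [eq_sub_iff_add_eq, ← h]
  have subl : ∀ (b c : M) (α : G) (x : M), p (b - c) α x = p b α x - p c α x := by
    intro b c α x
    have h := addl (b - c) c α x
    rw [sub_add_cancel] at h
    rw [eq_sub_iff_add_eq, ← h]
  constructor
  · intro h
    apply semiprime
    intro x γ δ
    rw [assoc]
    have haa : p a δ a = 0 := h a haU δ
    have hcomm : p a γ (p a δ x - p x δ a) = 0 := h _ (hU a haU x δ) γ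
    rw [subr] at hcomm
    have h1 : p a γ (p a δ x) = 0 := by rw [← assoc, hA, haa, zl]
    rw [h1, zero_sub, neg_eq_zero] at hcomm
    exact hcomm
  · intro h
    apply semiprime
    intro x γ δ
    have haa : p a δ a = 0 := h a haU δ
    have hcomm : p (p a γ x - p x γ a) δ a = 0 := h _ (hU a haU x γ) δ
    rw [subl] at hcomm
    have h1 : p (p x γ a) δ a = 0 := by rw [assoc, haa, zr]
    rw [h1, sub_zero] at hcomm
    exact hcomm
end

section
/- Let U be a Lie ideal of a 2-torsion free prime Γ-ring M satisfying assumption (A), such that u·α·u ∈ U for all u ∈ U, α ∈ Γ. If T : M → M is an additive map with T(u·α·u) = T(u)·α·u for all u ∈ U, α ∈ Γ, then T(u·α·v) = T(u)·α·v for all u, v ∈ U and α ∈ Γ. -/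
set_option linter.unusedSectionVars false
set_option maxHeartbeats 1000000

section Main
variable {M G : Type*} [AddCommGroup M] [AddCommGroup G]
variable (p : M → G → M → M)

private theorem pl0 (addl : ∀ a b α c, p (a + b) α c = p a α c + p b α c)
    (α : G) (c : M) : p 0 α c = 0 := by
  have h := addl 0 0 α c
  rw [add_zero] at h
  exact (left_eq_add.mp h)

private theorem pr0 (addr : ∀ a α b c, p a α (b + c) = p a α b + p a α c)
    (a : M) (α : G) : p a α 0 = 0 := by
  have h := addr a α 0 0
  rw [add_zero] at h
  exact (left_eq_add.mp h)

private theorem psubl (addl : ∀ a b α c, p (a + b) α c = p a α c + p b α c)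
    (a b : M) (α : G) (c : M) : p (a - b) α c = p a α c - p b α c := by
  have h := addl (a - b) b α c
  rw [sub_add_cancel] at h
  exact eq_sub_of_add_eq h.symm

private theorem psubr (addr : ∀ a α b c, p a α (b + c) = p a α b + p a α c)
    (a : M) (α : G) (b c : M) : p a α (b - c) = p a α b - p a α c := by
  have h := addr a α (b - c) c
  rw [sub_add_cancel] at h
  exact eq_sub_of_add_eq h.symm

private theorem sw5 (hA : ∀ a α b β c, p (p a α b) β c = p (p a β b) α c)
    (a x y m : M) (α' β γ δ' : G) :
    p (p (p (p a α' y) β m) γ x) δ' y = p (p (p (p a δ' y) β m) γ x) α' y := by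
  rw [hA (p (p a α' y) β m) γ x δ' y]
  rw [hA (p a α' y) β m δ' x]
  rw [hA a α' y δ' m]
  rw [hA (p a δ' y) α' m β x]
  rw [hA (p (p a δ' y) β m) α' x γ y]

private theorem kprod (assoc : ∀ a α b β c, p (p a α b) β c = p a α (p b β c))
    (hA : ∀ a α b β c, p (p a α b) β c = p (p a β b) α c)
    (addl : ∀ a b α c, p (a + b) α c = p a α c + p b α c)
    (addr : ∀ a α b c, p a α (b + c) = p a α b + p a α c)
    (u x y : M) (δ ε : G) :
    p u δ (p x ε y) - p (p x ε y) δ u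
      = p (p u δ x - p x δ u) ε y + p x ε (p u δ y - p y δ u) := by
  have e1 : p u δ (p x ε y) = p (p u δ x) ε y := (assoc u δ x ε y).symm
  have e2 : p (p x ε y) δ u = p x ε (p y δ u) := assoc x ε y δ u
  have e3 : p (p x δ u) ε y = p x ε (p u δ y) := by
    rw [hA x δ u ε y]; exact assoc x ε u δ y
  rw [psubl p addl (p u δ x) (p x δ u) ε y, psubr p addr x ε (p u δ y) (p y δ u),
    e1, e2, e3]
  abel

end Main

theorem stmt11
    {M G : Type*} [AddCommGroup M] [AddCommGroup G]
    (p : M → G → M → M)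
    (addl : ∀ a b α c, p (a + b) α c = p a α c + p b α c)
    (addm : ∀ a α β c, p a (α + β) c = p a α c + p a β c)
    (addr : ∀ a α b c, p a α (b + c) = p a α b + p a α c)
    (assoc : ∀ a α b β c, p (p a α b) β c = p a α (p b β c))
    (tf : ∀ x : M, 2 • x = 0 → x = 0)
    (hA : ∀ a α b β c, p (p a α b) β c = p (p a β b) α c)
    (prime : ∀ a b : M, (∀ (x : M) (γ δ : G), p (p a γ x) δ b = 0) → a = 0 ∨ b = 0)
    (U : AddSubgroup M)
    (hU : ∀ u ∈ U, ∀ (x : M) (α : G), p u α x - p x α u ∈ U)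
    (hsq : ∀ u ∈ U, ∀ α : G, p u α u ∈ U)
    (T : M → M) (hT : ∀ a b : M, T (a + b) = T a + T b)
    (hTJ : ∀ u ∈ U, ∀ α : G, T (p u α u) = p (T u) α u)
    : ∀ u ∈ U, ∀ v ∈ U, ∀ α : G, T (p u α v) = p (T u) α v := by
  -- ===== basic arithmetic helpers =====
  have half : ∀ x y : M, x + x = y + y → x = y := by
    intro x y h
    have h2 : (x - y) + (x - y) = (x + x) - (y + y) := by abel
    have h3 : (2 : ℕ) • (x - y) = 0 := by
      rw [two_smul, h2, h, sub_self]
    exact sub_eq_zero.mp (tf _ h3)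
  have quarter : ∀ x y : M, (x + x) + (x + x) = (y + y) + (y + y) → x = y := by
    intro x y h
    exact half _ _ (half _ _ h)
  have T0 : T 0 = 0 := by
    have h := hT 0 0
    rw [add_zero] at h
    exact (left_eq_add.mp h)
  have Tsub : ∀ a b : M, T (a - b) = T a - T b := by
    intro a b
    have h := hT (a - b) b
    rw [sub_add_cancel] at h
    exact eq_sub_of_add_eq h.symm
  -- ===== membership helpers =====
  have hUU : ∀ u ∈ U, ∀ v ∈ U, ∀ γ : G, p u γ v + p v γ u ∈ U := by
    intro u hu v hv γ
    have h1 := hsq (u + v) (U.add_mem hu hv) γ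
    have e : p u γ v + p v γ u = p (u + v) γ (u + v) - p u γ u - p v γ v := by
      rw [addl, addr, addr]; abel
    rw [e]
    exact U.sub_mem (U.sub_mem h1 (hsq u hu γ)) (hsq v hv γ)
  have hU2 : ∀ u ∈ U, ∀ v ∈ U, ∀ γ : G, p u γ v + p u γ v ∈ U := by
    intro u hu v hv γ
    have e : p u γ v + p u γ v = (p u γ v + p v γ u) + (p u γ v - p v γ u) := by abel
    rw [e]
    exact U.add_mem (hUU u hu v hv γ) (hU u hu v γ)
  -- ===== linearized Jordan relation =====
  have hB : ∀ u ∈ U, ∀ v ∈ U, ∀ α : G,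
      T (p u α v + p v α u) = p (T u) α v + p (T v) α u := by
    intro u hu v hv α
    have h := hTJ (u + v) (U.add_mem hu hv) α
    have e1 : p (u+v) α (u+v) = (p u α u + p v α v) + (p u α v + p v α u) := by
      rw [addl, addr, addr]; abel
    have e2 : p (T (u+v)) α (u+v) =
        (p (T u) α u + p (T v) α v) + (p (T u) α v + p (T v) α u) := by
      rw [hT, addl, addr, addr]; abel
    rw [e1, hT, hT, hTJ u hu α, hTJ v hv α, e2] at h
    exact add_left_cancel h
  -- ===== T(u v u) = T(u) v u =====
  have hC : ∀ u ∈ U, ∀ v ∈ U, ∀ β γ : G,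
      T (p (p u β v) γ u) = p (p (T u) β v) γ u := by
    intro u hu v hv β γ
    have hk : p u β v + p v β u ∈ U := hUU u hu v hv β
    have h := hB u hu (p u β v + p v β u) hk γ
    have Tk : T (p u β v + p v β u) = p (T u) β v + p (T v) β u := hB u hu v hv β
    have e1 : p u γ (p u β v + p v β u) + p (p u β v + p v β u) γ u
        = (p (p u γ u) β v + p v β (p u γ u))
          + (p (p u β v) γ u + p (p u β v) γ u) := by
      rw [addr u γ (p u β v) (p v β u), addl (p u β v) (p v β u) γ u,
          ← assoc u γ u β v, ← assoc u γ v β u, hA u γ v β u, assoc v β u γ u]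
      abel
    have e2 : p (T u) γ (p u β v + p v β u)
        = p (p (T u) γ u) β v + p (p (T u) β v) γ u := by
      rw [addr (T u) γ (p u β v) (p v β u), ← assoc (T u) γ u β v,
          ← assoc (T u) γ v β u, hA (T u) γ v β u]
    rw [e1, hT, hB (p u γ u) (hsq u hu γ) v hv β, hTJ u hu γ, e2, Tk,
        addl (p (T u) β v) (p (T v) β u) γ u, assoc (T v) β u γ u] at h
    apply half
    have h2 : T (p (p u β v) γ u + p (p u β v) γ u)
          + (p (p (T u) γ u) β v + p (T v) β (p u γ u))
        = (p (p (T u) β v) γ u + p (p (T u) β v) γ u)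
          + (p (p (T u) γ u) β v + p (T v) β (p u γ u)) := by
      calc T (p (p u β v) γ u + p (p u β v) γ u)
              + (p (p (T u) γ u) β v + p (T v) β (p u γ u))
          = (p (p (T u) γ u) β v + p (T v) β (p u γ u))
              + T (p (p u β v) γ u + p (p u β v) γ u) := by abel
        _ = p (p (T u) γ u) β v + p (p (T u) β v) γ u
              + (p (p (T u) β v) γ u + p (T v) β (p u γ u)) := h
        _ = (p (p (T u) β v) γ u + p (p (T u) β v) γ u)
              + (p (p (T u) γ u) β v + p (T v) β (p u γ u)) := by abel
    have h3 := add_right_cancel h2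
    rw [hT] at h3
    exact h3
  -- ===== linearization of hC =====
  have hD : ∀ x ∈ U, ∀ z ∈ U, ∀ y ∈ U, ∀ β γ : G,
      T (p (p x β y) γ z + p (p z β y) γ x)
        = p (p (T x) β y) γ z + p (p (T z) β y) γ x := by
    intro x hx z hz y hy β γ
    have h := hC (x + z) (U.add_mem hx hz) y hy β γ
    have e1 : p (p (x + z) β y) γ (x + z)
        = (p (p x β y) γ x + p (p z β y) γ z)
          + (p (p x β y) γ z + p (p z β y) γ x) := by
      rw [addl x z β y, addl (p x β y) (p z β y) γ (x+z), addr (p x β y) γ x z,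
          addr (p z β y) γ x z]
      abel
    have e2 : p (p (T (x + z)) β y) γ (x + z)
        = (p (p (T x) β y) γ x + p (p (T z) β y) γ z)
          + (p (p (T x) β y) γ z + p (p (T z) β y) γ x) := by
      rw [hT, addl (T x) (T z) β y, addl (p (T x) β y) (p (T z) β y) γ (x+z),
          addr (p (T x) β y) γ x z, addr (p (T z) β y) γ x z]
      abel
    rw [e1, hT, hT, hC x hx y hy β γ, hC z hz y hy β γ, e2] at h
    rw [add_assoc, add_assoc] at h
    exact add_left_cancel (add_left_cancel h)
  -- ===== the fundamental identity F =====
  have F : ∀ u ∈ U, ∀ v ∈ U, ∀ m ∈ U, ∀ α δ β γ : G,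
      p (p (T (p u α v) - p (T u) α v) β m) γ (p u δ v - p v δ u)
        + p (p (T (p u δ v) - p (T u) δ v) β m) γ (p u α v - p v α u) = 0 := by
    intro u hu v hv m hm α δ β γ
    -- grouped-form letter swap
    have ATsw : ∀ (a x y : M) (α' δ' : G),
        p (p (p a α' y) β m) γ (p x δ' y) = p (p (p a δ' y) β m) γ (p x α' y) := by
      intro a x y α' δ'
      rw [← assoc (p (p a α' y) β m) γ x δ' y, sw5 p hA a x y m α' β γ δ',
          assoc (p (p a δ' y) β m) γ x α' y]
    -- the diagonal identity (♦2)
    have dia : ∀ x, x ∈ U → ∀ y, y ∈ U → ∀ α' δ' : G,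
        T (p (p (p x α' y) β m) γ (p x δ' y)) + T (p (p (p x α' y) β m) γ (p x δ' y))
          = p (p (T (p x α' y)) β m) γ (p x δ' y)
            + p (p (T (p x δ' y)) β m) γ (p x α' y) := by
      intro x hx y hy α' δ'
      have hca : p x α' y + p y α' x ∈ U := hUU x hx y hy α'
      have hcd : p x δ' y + p y δ' x ∈ U := hUU x hx y hy δ'
      have hda : p x α' y - p y α' x ∈ U := hU x hx y α'
      have hdd : p x δ' y - p y δ' x ∈ U := hU x hx y δ'
      have h1 := hD _ hca _ hcd m hm β γ
      have h2 := hD _ hda _ hdd m hm β γ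
      have h3 := hD _ hca _ hdd m hm β γ
      have h4 := hD _ hda _ hcd m hm β γ
      rw [hT] at h1 h2 h3 h4
      apply quarter
      have eelem : (p (p (p x α' y) β m) γ (p x δ' y) + p (p (p x α' y) β m) γ (p x δ' y)
            + (p (p (p x α' y) β m) γ (p x δ' y) + p (p (p x α' y) β m) γ (p x δ' y)))
          + (p (p (p x α' y) β m) γ (p x δ' y) + p (p (p x α' y) β m) γ (p x δ' y)
            + (p (p (p x α' y) β m) γ (p x δ' y) + p (p (p x α' y) β m) γ (p x δ' y)))
          = (p (p (p x α' y + p y α' x) β m) γ (p x δ' y + p y δ' x)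
              + p (p (p x δ' y + p y δ' x) β m) γ (p x α' y + p y α' x))
            + (p (p (p x α' y - p y α' x) β m) γ (p x δ' y - p y δ' x)
              + p (p (p x δ' y - p y δ' x) β m) γ (p x α' y - p y α' x))
            + ((p (p (p x α' y + p y α' x) β m) γ (p x δ' y - p y δ' x)
              + p (p (p x δ' y - p y δ' x) β m) γ (p x α' y + p y α' x))
            + (p (p (p x α' y - p y α' x) β m) γ (p x δ' y + p y δ' x)
              + p (p (p x δ' y + p y δ' x) β m) γ (p x α' y - p y α' x))) := by
        simp only [addl, addr, psubl p addl, psubr p addr]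
        rw [ATsw x x y δ' α']
        abel
      have e' := congrArg T eelem
      simp only [hT] at e'
      rw [h1, h2, h3, h4] at e'
      rw [e']
      rw [hT (p x α' y) (p y α' x), hT (p x δ' y) (p y δ' x),
          Tsub (p x α' y) (p y α' x), Tsub (p x δ' y) (p y δ' x)]
      simp only [addl, addr, psubl p addl, psubr p addr]
      abel
    -- linearized (E1): T(x y m x y + y y m x x) = ...
    have e1L : ∀ x, x ∈ U → ∀ y, y ∈ U → ∀ α' δ' : G,
        T (p (p (p (p x α' y) β m) γ x) δ' y + p (p (p (p y α' y) β m) γ x) δ' x)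
          = p (p (p (p (T x) α' y) β m) γ x) δ' y
            + p (p (p (p (T y) α' y) β m) γ x) δ' x := by
      intro x hx y hy α' δ'
      have hw1 : p y β m + p y β m ∈ U := hU2 y hy m hm β
      have hw2 : p (p y β m + p y β m) γ x + p (p y β m + p y β m) γ x ∈ U :=
        hU2 _ hw1 x hx γ
      have ew : ∀ a : M,
          p a α' (p (p y β m + p y β m) γ x + p (p y β m + p y β m) γ x)
            = p (p (p a α' y) β m) γ x + p (p (p a α' y) β m) γ x
              + (p (p (p a α' y) β m) γ x + p (p (p a α' y) β m) γ x) := by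
        intro a
        rw [addr a α' (p (p y β m + p y β m) γ x) (p (p y β m + p y β m) γ x),
            ← assoc a α' (p y β m + p y β m) γ x,
            addr a α' (p y β m) (p y β m), ← assoc a α' y β m, addl]
      have h := hD x hx y hy _ hw2 α' δ'
      rw [ew x, ew y, ew (T x), ew (T y)] at h
      simp only [addl] at h
      apply quarter
      calc T (p (p (p (p x α' y) β m) γ x) δ' y + p (p (p (p y α' y) β m) γ x) δ' x)
            + T (p (p (p (p x α' y) β m) γ x) δ' y + p (p (p (p y α' y) β m) γ x) δ' x)
            + (T (p (p (p (p x α' y) β m) γ x) δ' y + p (p (p (p y α' y) β m) γ x) δ' x)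
            + T (p (p (p (p x α' y) β m) γ x) δ' y + p (p (p (p y α' y) β m) γ x) δ' x))
          = T ((p (p (p (p x α' y) β m) γ x) δ' y + p (p (p (p y α' y) β m) γ x) δ' x)
            + (p (p (p (p x α' y) β m) γ x) δ' y + p (p (p (p y α' y) β m) γ x) δ' x)
            + ((p (p (p (p x α' y) β m) γ x) δ' y + p (p (p (p y α' y) β m) γ x) δ' x)
            + (p (p (p (p x α' y) β m) γ x) δ' y + p (p (p (p y α' y) β m) γ x) δ' x))) := by
            simp only [hT]
        _ = T (p (p (p (p x α' y) β m) γ x) δ' y + p (p (p (p x α' y) β m) γ x) δ' y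
            + (p (p (p (p x α' y) β m) γ x) δ' y + p (p (p (p x α' y) β m) γ x) δ' y)
            + (p (p (p (p y α' y) β m) γ x) δ' x + p (p (p (p y α' y) β m) γ x) δ' x
            + (p (p (p (p y α' y) β m) γ x) δ' x + p (p (p (p y α' y) β m) γ x) δ' x))) :=
            congrArg T (by abel)
        _ = p (p (p (p (T x) α' y) β m) γ x) δ' y + p (p (p (p (T x) α' y) β m) γ x) δ' y
            + (p (p (p (p (T x) α' y) β m) γ x) δ' y + p (p (p (p (T x) α' y) β m) γ x) δ' y)
            + (p (p (p (p (T y) α' y) β m) γ x) δ' x + p (p (p (p (T y) α' y) β m) γ x) δ' x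
            + (p (p (p (p (T y) α' y) β m) γ x) δ' x + p (p (p (p (T y) α' y) β m) γ x) δ' x)) := h
        _ = p (p (p (p (T x) α' y) β m) γ x) δ' y + p (p (p (p (T y) α' y) β m) γ x) δ' x
            + (p (p (p (p (T x) α' y) β m) γ x) δ' y + p (p (p (p (T y) α' y) β m) γ x) δ' x)
            + (p (p (p (p (T x) α' y) β m) γ x) δ' y + p (p (p (p (T y) α' y) β m) γ x) δ' x
            + (p (p (p (p (T x) α' y) β m) γ x) δ' y + p (p (p (p (T y) α' y) β m) γ x) δ' x)) := by
            abel
    -- (E3)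
    have e3L :
        T (p (p (p (p u α v) β m) γ u) δ v) + T (p (p (p (p v δ u) β m) γ v) α u)
          = p (p (p (p (T u) α v) β m) γ u) δ v + p (p (p (p (T v) δ u) β m) γ v) α u := by
      have h1 := e1L u hu v hv α δ
      have h2 := e1L v hv u hu δ α
      have h3 := hD (p v α v) (hsq v hv α) (p u δ u) (hsq u hu δ) m hm β γ
      rw [hTJ v hv α, hTJ u hu δ,
          ← assoc (p (p v α v) β m) γ u δ u, ← assoc (p (p u δ u) β m) γ v α v,
          ← assoc (p (p (T v) α v) β m) γ u δ u, ← assoc (p (p (T u) δ u) β m) γ v α v] at h3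
      rw [hT] at h1 h2 h3
      have hx : (T (p (p (p (p u α v) β m) γ u) δ v) + T (p (p (p (p v δ u) β m) γ v) α u))
            + (T (p (p (p (p v α v) β m) γ u) δ u) + T (p (p (p (p u δ u) β m) γ v) α v))
          = (p (p (p (p (T u) α v) β m) γ u) δ v + p (p (p (p (T v) δ u) β m) γ v) α u)
            + (p (p (p (p (T v) α v) β m) γ u) δ u + p (p (p (p (T u) δ u) β m) γ v) α v) := by
        calc (T (p (p (p (p u α v) β m) γ u) δ v) + T (p (p (p (p v δ u) β m) γ v) α u))
              + (T (p (p (p (p v α v) β m) γ u) δ u) + T (p (p (p (p u δ u) β m) γ v) α v))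
            = (T (p (p (p (p u α v) β m) γ u) δ v) + T (p (p (p (p v α v) β m) γ u) δ u))
              + (T (p (p (p (p v δ u) β m) γ v) α u) + T (p (p (p (p u δ u) β m) γ v) α v)) := by
              abel
          _ = (p (p (p (p (T u) α v) β m) γ u) δ v + p (p (p (p (T v) α v) β m) γ u) δ u)
              + (p (p (p (p (T v) δ u) β m) γ v) α u + p (p (p (p (T u) δ u) β m) γ v) α v) := by
              rw [h1, h2]
          _ = _ := by abel
      rw [h3] at hx
      exact add_right_cancel hx
    -- convert dia instances to left-normed form
    have dA := dia u hu v hv α δ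
    rw [← assoc (p (p u α v) β m) γ u δ v, ← assoc (p (T (p u α v)) β m) γ u δ v,
        ← assoc (p (T (p u δ v)) β m) γ u α v] at dA
    have dC := dia v hv u hu δ α
    rw [← assoc (p (p v δ u) β m) γ v α u, ← assoc (p (T (p v δ u)) β m) γ v α u,
        ← assoc (p (T (p v α u)) β m) γ v δ u] at dC
    have comb : (p (p (p (T (p u α v)) β m) γ u) δ v + p (p (p (T (p u δ v)) β m) γ u) α v)
          + (p (p (p (T (p v δ u)) β m) γ v) α u + p (p (p (T (p v α u)) β m) γ v) δ u)
        = (p (p (p (p (T u) α v) β m) γ u) δ v + p (p (p (p (T v) δ u) β m) γ v) α u)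
          + (p (p (p (p (T u) α v) β m) γ u) δ v + p (p (p (p (T v) δ u) β m) γ v) α u) := by
      rw [← dA, ← dC]
      calc (T (p (p (p (p u α v) β m) γ u) δ v) + T (p (p (p (p u α v) β m) γ u) δ v))
            + (T (p (p (p (p v δ u) β m) γ v) α u) + T (p (p (p (p v δ u) β m) γ v) α u))
          = (T (p (p (p (p u α v) β m) γ u) δ v) + T (p (p (p (p v δ u) β m) γ v) α u))
            + (T (p (p (p (p u α v) β m) γ u) δ v) + T (p (p (p (p v δ u) β m) γ v) α u)) := by
            abel
        _ = _ := by rw [e3L]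
    -- eliminate T(v α u) and T(v δ u)
    have hBa := hB u hu v hv α
    rw [hT] at hBa
    have hBd := hB u hu v hv δ
    rw [hT] at hBd
    have eQa : T (p v α u) = p (T u) α v + p (T v) α u - T (p u α v) := by
      rw [← hBa]; abel
    have eQd : T (p v δ u) = p (T u) δ v + p (T v) δ u - T (p u δ v) := by
      rw [← hBd]; abel
    rw [eQa, eQd] at comb
    simp only [addl, psubl p addl] at comb
    rw [sw5 p hA (T v) v u m α β γ δ] at comb
    have comb0 := sub_eq_zero.mpr comb
    -- expand the goal and match
    simp only [psubl p addl, psubr p addr, addl, addr, ← assoc]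
    rw [sw5 p hA (T u) u v m δ β γ α]
    rw [← comb0]
    abel

  -- ===== F with equal letters =====
  have F1 : ∀ u ∈ U, ∀ v ∈ U, ∀ m ∈ U, ∀ α β γ : G,
      p (p (T (p u α v) - p (T u) α v) β m) γ (p u α v - p v α u) = 0 := by
    intro u hu v hv m hm α β γ
    have h := F u hu v hv m hm α α β γ
    refine half _ 0 ?_
    rw [add_zero]
    exact h
  -- ===== the key primeness lemma =====
  have lemL : ∀ b D z0 w0 : M, z0 ∈ U → w0 ∈ U → ∀ μ : G,
      p z0 μ w0 - p w0 μ z0 ≠ 0 → D ≠ 0 →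
      (∀ m ∈ U, ∀ β γ : G, p (p b β m) γ D = 0) → b = 0 := by
    intro b D z0 w0 hz0 hw0 μ hzw hD0 hbD
    by_contra hb
    -- V2 : b m z D = b z m D
    have V2 : ∀ m ∈ U, ∀ (z : M) (β δ' γ' : G),
        p (p (p b β m) δ' z) γ' D = p (p (p b β z) δ' m) γ' D := by
      intro m hm z β δ' γ'
      have h := hbD _ (hU m hm z δ') β γ'
      rw [psubr p addr b β (p m δ' z) (p z δ' m), ← assoc b β m δ' z,
          ← assoc b β z δ' m, psubl p addl, sub_eq_zero] at h
      exact h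
    -- V4 : b u x s D = b x u s D   (u,s ∈ U)
    have V4 : ∀ u ∈ U, ∀ s ∈ U, ∀ (x : M) (β δ' ε' γ' : G),
        p (p (p (p b β u) δ' x) ε' s) γ' D = p (p (p (p b β x) δ' u) ε' s) γ' D := by
      intro u hu' s hs x β δ' ε' γ'
      have hmem : p (p u δ' x - p x δ' u) ε' s + p (p u δ' x - p x δ' u) ε' s ∈ U :=
        hU2 _ (hU u hu' x δ') s hs ε'
      have h := hbD _ hmem β γ'
      rw [addr b β (p (p u δ' x - p x δ' u) ε' s) (p (p u δ' x - p x δ' u) ε' s),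
          addl] at h
      have h2 : p (p b β (p (p u δ' x - p x δ' u) ε' s)) γ' D = 0 :=
        half _ 0 (by rw [add_zero]; exact h)
      rw [← assoc b β (p u δ' x - p x δ' u) ε' s,
          psubr p addr b β (p u δ' x) (p x δ' u), ← assoc b β u δ' x,
          ← assoc b β x δ' u, psubl p addl, psubl p addl, sub_eq_zero] at h2
      exact h2
    -- prime extraction : for u,s ∈ U,  s (u D) = u (s D)
    have hW : ∀ u ∈ U, ∀ s ∈ U, ∀ δB γ' : G,
        p (p s δB u) γ' D = p (p u δB s) γ' D := by
      intro u hu' s hs δB γ'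
      have hx : ∀ (x : M) (γ₁ δ₁ : G),
          p (p b γ₁ x) δ₁ (p s δB (p u γ' D) - p u δB (p s γ' D)) = 0 := by
        intro x γ₁ δ₁
        rw [psubr p addr (p b γ₁ x) δ₁ (p s δB (p u γ' D)) (p u δB (p s γ' D)),
            ← assoc s δB u γ' D, ← assoc u δB s γ' D,
            ← assoc (p b γ₁ x) δ₁ (p s δB u) γ' D,
            ← assoc (p b γ₁ x) δ₁ (p u δB s) γ' D,
            ← assoc (p b γ₁ x) δ₁ s δB u, ← assoc (p b γ₁ x) δ₁ u δB s,
            sub_eq_zero]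
        -- goal : b x s u D = b x u s D   (letters γ₁ δ₁ δB γ')
        -- (i) : from V2 with m := u, z := x δ₁ s
        have hi := V2 u hu' (p x δ₁ s) γ₁ δB γ'
        rw [← assoc (p b γ₁ u) δB x δ₁ s, ← assoc b γ₁ x δ₁ s] at hi
        -- hi : p (p (p (p b γ₁ u) δB x) δ₁ s) γ' D = p (p (p (p b γ₁ x) δ₁ s) δB u) γ' D
        -- (ii) : V4
        have hii := V4 u hu' s hs x γ₁ δB δ₁ γ'
        -- hii : p (p (p (p b γ₁ u) δB x) δ₁ s) γ' D = p (p (p (p b γ₁ x) δB u) δ₁ s) γ' D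
        rw [← hi, hii, hA (p b γ₁ x) δB u δ₁ s]
      rcases prime b (p s δB (p u γ' D) - p u δB (p s γ' D)) (fun x γ₁ δ₁ => hx x γ₁ δ₁)
        with hb0 | hW0
      · exact absurd hb0 hb
      · have := sub_eq_zero.mp hW0
        rw [← assoc s δB u γ' D, ← assoc u δB s γ' D] at this
        exact this
    -- Z1 : [u,v] x D = 0  for u,v ∈ U
    have Z1 : ∀ u ∈ U, ∀ v ∈ U, ∀ (x : M) (γ' δ' ε' : G),
        p (p (p u γ' v - p v γ' u) δ' x) ε' D = 0 := by
      intro u hu' v hv' x γ' δ' ε'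
      have h1 := hW u hu' _ (hU v hv' x δ') γ' ε'
      rw [psubl p addl (p v δ' x) (p x δ' v) γ' u, psubl p addl,
          psubr p addr u γ' (p v δ' x) (p x δ' v), ← assoc u γ' v δ' x,
          ← assoc u γ' x δ' v, psubl p addl] at h1
      rw [hA v δ' x γ' u] at h1
      -- h1 : vxu - xvu = uvx - uxv
      have h2 := hW v hv' _ (hU u hu' x δ') γ' ε'
      rw [psubl p addl (p u δ' x) (p x δ' u) γ' v, psubl p addl,
          psubr p addr v γ' (p u δ' x) (p x δ' u), ← assoc v γ' u δ' x,
          ← assoc v γ' x δ' u, psubl p addl] at h2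
      rw [hA u δ' x γ' v] at h2
      -- h2 : uxv - xuv = vux - vxu
      have exdiff : p (p (p x δ' u) γ' v) ε' D - p (p (p x δ' v) γ' u) ε' D = 0 := by
        have hWuv := hW u hu' v hv' γ' ε'
        rw [assoc (p x δ' u) γ' v ε' D, assoc x δ' u γ' (p v ε' D),
            ← assoc u γ' v ε' D, assoc (p x δ' v) γ' u ε' D,
            assoc x δ' v γ' (p u ε' D), ← assoc v γ' u ε' D, hWuv, sub_self]
      have h1e := eq_add_of_sub_eq h1.symm
      have h2e := eq_add_of_sub_eq h2.symm
      rw [psubl p addl (p u γ' v) (p v γ' u) δ' x, psubl p addl, h1e, h2e, ← exdiff]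
      abel
    have hfin := prime (p z0 μ w0 - p w0 μ z0) D (fun x γ' δ' => Z1 z0 hz0 w0 hw0 x μ γ' δ')
    rcases hfin with h0 | h0
    · exact hzw h0
    · exact hD0 h0
  -- ===== claim2 =====
  have claim2 : ∀ x ∈ U, ∀ y ∈ U, ∀ δ0 : G, p x δ0 y - p y δ0 x ≠ 0 →
      ∀ α : G, T (p x α y) - p (T x) α y = 0 := by
    intro x hx y hy δ0 hd α
    by_cases hda : p x α y - p y α x = 0
    · refine lemL _ (p x δ0 y - p y δ0 x) x y hx hy δ0 hd hd ?_
      intro m hm β γ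
      have h := F x hx y hy m hm α δ0 β γ
      rw [hda, pr0 p addr, add_zero] at h
      exact h
    · refine lemL _ (p x α y - p y α x) x y hx hy α hda hda ?_
      intro m hm β γ
      exact F1 x hx y hy m hm α β γ
  -- ===== additivity of the obstruction =====
  have aaddl : ∀ (u z v : M) (α : G),
      T (p (u + z) α v) - p (T (u + z)) α v
        = (T (p u α v) - p (T u) α v) + (T (p z α v) - p (T z) α v) := by
    intro u z v α
    rw [addl, hT, hT, addl]
    abel
  have aaddr : ∀ (u v w : M) (α : G),
      T (p u α (v + w)) - p (T u) α (v + w)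
        = (T (p u α v) - p (T u) α v) + (T (p u α w) - p (T u) α w) := by
    intro u v w α
    rw [addr, hT, addr]
    abel
  by_cases hcom : ∀ z ∈ U, ∀ w ∈ U, ∀ γ' : G, p z γ' w = p w γ' z
  · -- ===== Case A : U is commutative, hence central =====
    -- every element of U is central
    have ucent : ∀ u ∈ U, ∀ (x : M) (γ' : G), p u γ' x = p x γ' u := by
      intro u hu x0 γ0
      have hk0 : ∀ (z : M) (δ ζ : G),
          p u ζ (p u δ z - p z δ u) - p (p u δ z - p z δ u) ζ u = 0 := by
        intro z δ ζ
        rw [hcom u hu _ (hU u hu z δ) ζ, sub_self]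
      have st1 : ∀ (x y : M) (δ ζ ε : G),
          p (p u δ x - p x δ u) ε (p u ζ y - p y ζ u)
            + p (p u ζ x - p x ζ u) ε (p u δ y - p y δ u) = 0 := by
        intro x y δ ζ ε
        have h := hk0 (p x ε y) δ ζ
        rw [kprod p assoc hA addl addr u x y δ ε] at h
        rw [addr u ζ (p (p u δ x - p x δ u) ε y) (p x ε (p u δ y - p y δ u)),
            addl (p (p u δ x - p x δ u) ε y) (p x ε (p u δ y - p y δ u)) ζ u] at h
        have e1 := kprod p assoc hA addl addr u (p u δ x - p x δ u) y ζ ε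
        rw [hk0 x δ ζ, pl0 p addl, zero_add] at e1
        have e2 := kprod p assoc hA addl addr u x (p u δ y - p y δ u) ζ ε
        rw [hk0 y δ ζ, pr0 p addr, add_zero] at e2
        rw [← e1, ← e2, ← h]
        abel
      have KK : ∀ (x y : M) (ζ ε : G),
          p (p u ζ x - p x ζ u) ε (p u ζ y - p y ζ u) = 0 := by
        intro x y ζ ε
        exact half _ 0 (by rw [add_zero]; exact st1 x y ζ ζ ε)
      have KY : ∀ (y : M) (ε μ' : G),
          p (p (p u γ0 x0 - p x0 γ0 u) ε y) μ' (p u γ0 x0 - p x0 γ0 u) = 0 := by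
        intro y ε μ'
        have h := KK x0 (p y μ' x0) γ0 ε
        rw [kprod p assoc hA addl addr u y x0 γ0 μ'] at h
        rw [addr (p u γ0 x0 - p x0 γ0 u) ε (p (p u γ0 y - p y γ0 u) μ' x0)
              (p y μ' (p u γ0 x0 - p x0 γ0 u)),
            ← assoc (p u γ0 x0 - p x0 γ0 u) ε (p u γ0 y - p y γ0 u) μ' x0,
            KK x0 y γ0 ε, pl0 p addl, zero_add,
            ← assoc (p u γ0 x0 - p x0 γ0 u) ε y μ' (p u γ0 x0 - p x0 γ0 u)] at h
        exact h
      rcases prime (p u γ0 x0 - p x0 γ0 u) (p u γ0 x0 - p x0 γ0 u)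
        (fun y ε μ' => KY y ε μ') with h | h <;> exact sub_eq_zero.mp h
    -- the relation  (Tu α u) β v = (Tv α u) β u
    have hC1' : ∀ u ∈ U, ∀ v ∈ U, ∀ α β : G,
        p (p (T u) α u) β v = p (p (T v) α u) β u := by
      intro u hu v hv α β
      have hsv : T (p (p u β u) α v) = p (p (T u) β u) α v := by
        have h := hC u hu v hv β α
        have e : p (p u β v) α u = p (p u β u) α v := by
          rw [assoc u β v α u, ucent v hv u α, ← assoc u β u α v]
        have e2 : p (p (T u) β v) α u = p (p (T u) β u) α v := by
          rw [assoc (T u) β v α u, ucent v hv u α, ← assoc (T u) β u α v]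
        rw [e, e2] at h
        exact h
      have hs : p u β u ∈ U := hsq u hu β
      have h := hB (p u β u) hs v hv α
      rw [show p v α (p u β u) = p (p u β u) α v from (ucent (p u β u) hs v α).symm,
          hT, hTJ u hu β, hsv] at h
      have h2 := add_left_cancel h
      -- h2 : p (p (T u) β u) α v = p (T v) α (p u β u)
      rw [← assoc (T v) α u β u] at h2
      -- h2 : p (p (T u) β u) α v = p (p (T v) α u) β u
      rw [hA (T u) α u β v]
      exact h2
    -- main goal in case A
    intro u hu v hv α
    have hC2 : ∀ w ∈ U, ∀ β : G,
        p (p (T u) α w) β v + p (p (T w) α u) β v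
          = p (p (T v) α u) β w + p (p (T v) α w) β u := by
      intro w hw β
      have h := hC1' (u + w) (U.add_mem hu hw) v hv α β
      rw [hT] at h
      rw [addl (T u) (T w) α (u + w), addr (T u) α u w, addr (T w) α u w,
          addl, addl, addl] at h
      rw [addr (T v) α u w, addl (p (T v) α u) (p (T v) α w) β (u + w),
          addr (p (T v) α u) β u w, addr (p (T v) α w) β u w] at h
      rw [hC1' u hu v hv α β, hC1' w hw v hv α β] at h
      have h0 := sub_eq_zero.mpr h
      rw [← sub_eq_zero, ← h0]
      abel
    have hC3 : ∀ β : G, p (p (T u) α v) β v = p (p (T v) α v) β u := by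
      intro β
      have h := hC2 v hv β
      rw [add_comm (p (p (T v) α u) β v) (p (p (T v) α v) β u)] at h
      exact add_right_cancel h
    have hC4 : ∀ β : G, p (p (T u) α v - p (T v) α u) β v = 0 := by
      intro β
      rw [psubl p addl, sub_eq_zero, hC3 β, assoc (T v) α v β u, ucent v hv u β,
          ← assoc (T v) α u β v]
    have KE : ∀ (x : M) (β' δ' : G),
        p (p (p (T u) α v - p (T v) α u) β' x) δ' v = 0 := by
      intro x β' δ'
      rw [assoc (p (T u) α v - p (T v) α u) β' x δ' v,
          show p x δ' v = p v δ' x from (ucent v hv x δ').symm,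
          ← assoc (p (T u) α v - p (T v) α u) β' v δ' x, hC4 β', pl0 p addl]
    rcases prime (p (T u) α v - p (T v) α u) v KE with hE | hv0
    · have h := hB u hu v hv α
      rw [ucent v hv u α, hT] at h
      rw [← sub_eq_zero.mp hE] at h
      exact half _ _ h
    · rw [hv0, pr0 p addr, pr0 p addr, T0]
  · -- ===== Case B : U not commutative =====
    push_neg at hcom
    obtain ⟨z0, hz0, w0, hw0, μ, hne⟩ := hcom
    have hD0 : p z0 μ w0 - p w0 μ z0 ≠ 0 := sub_ne_zero.mpr hne
    intro u hu v hv α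
    rw [← sub_eq_zero]
    by_cases hex : ∃ δ' : G, p u δ' v - p v δ' u ≠ 0
    · obtain ⟨δ', hδ⟩ := hex
      exact claim2 u hu v hv δ' hδ α
    · push_neg at hex
      by_cases hc1 : ∃ z ∈ U, ∃ δ' : G, p z δ' v - p v δ' z ≠ 0
      · obtain ⟨z, hz, δ', hδ⟩ := hc1
        have h1 : T (p (u + z) α v) - p (T (u + z)) α v = 0 := by
          refine claim2 (u + z) (U.add_mem hu hz) v hv δ' ?_ α
          have e : p (u + z) δ' v - p v δ' (u + z)
              = (p u δ' v - p v δ' u) + (p z δ' v - p v δ' z) := by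
            rw [addl, addr]; abel
          rw [e, hex δ', zero_add]
          exact hδ
        have h2 := claim2 z hz v hv δ' hδ α
        have e := aaddl u z v α
        rw [h1, h2, add_zero] at e
        exact e.symm
      · push_neg at hc1
        by_cases hc2 : ∃ w ∈ U, ∃ δ' : G, p u δ' w - p w δ' u ≠ 0
        · obtain ⟨w, hw, δ', hδ⟩ := hc2
          have h1 : T (p u α (v + w)) - p (T u) α (v + w) = 0 := by
            refine claim2 u hu (v + w) (U.add_mem hv hw) δ' ?_ α
            have e : p u δ' (v + w) - p (v + w) δ' u
                = (p u δ' v - p v δ' u) + (p u δ' w - p w δ' u) := by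
              rw [addl, addr]; abel
            rw [e, hex δ', zero_add]
            exact hδ
          have h2 : T (p u α w) - p (T u) α w = 0 := by
            by_cases hdw : p u α w - p w α u = 0
            · exact claim2 u hu w hw δ' hδ α
            · exact claim2 u hu w hw δ' hδ α
          have e := aaddr u v w α
          rw [h1, h2, add_zero] at e
          exact e.symm
        · push_neg at hc2
          have hduw0 : p u μ w0 - p w0 μ u = 0 := hc2 w0 hw0 μ
          have hdz0v : p z0 μ v - p v μ z0 = 0 := hc1 z0 hz0 μ
          have hduv : p u μ v - p v μ u = 0 := hex μ
          have ha4 := claim2 z0 hz0 w0 hw0 μ hD0 α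
          have hd1 : p (u + z0) μ w0 - p w0 μ (u + z0) ≠ 0 := by
            have e : p (u + z0) μ w0 - p w0 μ (u + z0)
                = (p u μ w0 - p w0 μ u) + (p z0 μ w0 - p w0 μ z0) := by
              rw [addl, addr]; abel
            rw [e, hduw0, zero_add]
            exact hD0
          have ha5 := claim2 (u + z0) (U.add_mem hu hz0) w0 hw0 μ hd1 α
          have ha_uw0 : T (p u α w0) - p (T u) α w0 = 0 := by
            have e := aaddl u z0 w0 α
            rw [ha5, ha4, add_zero] at e
            exact e.symm
          have hd2 : p z0 μ (v + w0) - p (v + w0) μ z0 ≠ 0 := by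
            have e : p z0 μ (v + w0) - p (v + w0) μ z0
                = (p z0 μ v - p v μ z0) + (p z0 μ w0 - p w0 μ z0) := by
              rw [addl, addr]; abel
            rw [e, hdz0v, zero_add]
            exact hD0
          have ha6 := claim2 z0 hz0 (v + w0) (U.add_mem hv hw0) μ hd2 α
          have ha_z0v : T (p z0 α v) - p (T z0) α v = 0 := by
            have e := aaddr z0 v w0 α
            rw [ha6, ha4, add_zero] at e
            exact e.symm
          have hd3 : p (u + z0) μ (v + w0) - p (v + w0) μ (u + z0) ≠ 0 := by
            have e : p (u + z0) μ (v + w0) - p (v + w0) μ (u + z0)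
                = ((p u μ v - p v μ u) + (p u μ w0 - p w0 μ u))
                  + ((p z0 μ v - p v μ z0) + (p z0 μ w0 - p w0 μ z0)) := by
              rw [addl u z0 μ (v + w0), addr u μ v w0, addr z0 μ v w0,
                  addl v w0 μ (u + z0), addr v μ u z0, addr w0 μ u z0]
              abel
            rw [e, hduv, hduw0, hdz0v, zero_add, zero_add, zero_add]
            exact hD0
          have ha7 := claim2 (u + z0) (U.add_mem hu hz0) (v + w0) (U.add_mem hv hw0) μ hd3 α
          rw [aaddl u z0 (v + w0) α, aaddr u v w0 α, aaddr z0 v w0 α,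
              ha_uw0, ha4, ha_z0v, add_zero, add_zero, add_zero] at ha7
          exact ha7
end

section
/- Let M be a 2-torsion free prime Γ-ring satisfying assumption (A). If T : M → M is an additive map with T(xαx) = T(x)αx for all x ∈ M and α ∈ Γ (a Jordan left centralizer), then T(xαy) = T(x)αy for all x, y ∈ M and α ∈ Γ (T is a left centralizer). -/
theorem stmt12
    {M G : Type*} [AddCommGroup M] [AddCommGroup G]
    (p : M → G → M → M)
    (addl : ∀ a b α c, p (a + b) α c = p a α c + p b α c)
    (addm : ∀ a α β c, p a (α + β) c = p a α c + p a β c)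
    (addr : ∀ a α b c, p a α (b + c) = p a α b + p a α c)
    (assoc : ∀ a α b β c, p (p a α b) β c = p a α (p b β c))
    (tf : ∀ x : M, 2 • x = 0 → x = 0)
    (hA : ∀ a α b β c, p (p a α b) β c = p (p a β b) α c)
    (prime : ∀ a b : M, (∀ (x : M) (γ δ : G), p (p a γ x) δ b = 0) → a = 0 ∨ b = 0)
    (T : M → M) (hT : ∀ a b : M, T (a + b) = T a + T b)
    (hTJ : ∀ (x : M) (α : G), T (p x α x) = p (T x) α x)
    : ∀ (x y : M) (α : G), T (p x α y) = p (T x) α y := by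
  -- basic additivity consequences
  have p0l : ∀ (α : G) (c : M), p 0 α c = 0 := by
    intro α c
    have h := addl 0 0 α c
    rw [add_zero] at h
    linear_combination (norm := abel1) -h
  have negl : ∀ (b : M) (α : G) (c : M), p (-b) α c = - p b α c := by
    intro b α c
    have h := addl b (-b) α c
    rw [add_neg_cancel, p0l] at h
    linear_combination (norm := abel1) -h
  have subl : ∀ (a b : M) (α : G) (c : M), p (a - b) α c = p a α c - p b α c := by
    intro a b α c
    rw [sub_eq_add_neg, addl, negl, ← sub_eq_add_neg]
  have p0r : ∀ (a : M) (α : G), p a α 0 = 0 := by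
    intro a α
    have h := addr a α 0 0
    rw [add_zero] at h
    linear_combination (norm := abel1) -h
  have negr : ∀ (a : M) (α : G) (c : M), p a α (-c) = - p a α c := by
    intro a α c
    have h := addr a α c (-c)
    rw [add_neg_cancel, p0r] at h
    linear_combination (norm := abel1) -h
  have subr : ∀ (a : M) (α : G) (b c : M), p a α (b - c) = p a α b - p a α c := by
    intro a α b c
    rw [sub_eq_add_neg, addr, negr, ← sub_eq_add_neg]
  have T0 : T 0 = 0 := by
    have h := hT 0 0
    rw [add_zero] at h
    linear_combination (norm := abel1) -h
  -- Step 1: linearized Jordan condition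
  have L1 : ∀ (x y : M) (α : G),
      T (p x α y) + T (p y α x) = p (T x) α y + p (T y) α x := by
    intro x y α
    have h := hTJ (x + y) α
    simp only [addl, addr, hT] at h
    rw [hTJ x α, hTJ y α] at h
    linear_combination (norm := abel1) h
  -- Step 2: T (x α u β x) = T x α u β x
  have L2 : ∀ (x u : M) (α β : G),
      T (p (p x α u) β x) = p (p (T x) α u) β x := by
    intro x u α β
    have h := L1 x (p x β u + p u β x) α
    simp only [addl, addr, hT] at h
    rw [← assoc x α x β u, ← assoc x α u β x, hA x β u α x, assoc u β x α x,
        ← assoc (T x) α x β u, ← assoc (T x) α u β x] at h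
    have hc := L1 (p x α x) u β
    rw [hTJ x α] at hc
    have a1 : p (T (p x β u)) α x + p (T (p u β x)) α x
        = p (p (T x) β u) α x + p (p (T u) β x) α x := by
      rw [← addl, L1 x u β, addl]
    have a2 : p (p (T x) β u) α x = p (p (T x) α u) β x := hA (T x) β u α x
    have a3 : p (p (T u) β x) α x = p (T u) β (p x α x) := assoc (T u) β x α x
    have h2 : T (p (p x α u) β x) + T (p (p x α u) β x)
        = p (p (T x) α u) β x + p (p (T x) α u) β x := by
      linear_combination (norm := abel1) h - hc + a1 + a2 + a3
    have h3 := tf (T (p (p x α u) β x) - p (p (T x) α u) β x)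
      (by rw [two_nsmul]; linear_combination (norm := abel1) h2)
    exact sub_eq_zero.mp h3
  -- Step 3: linearization of L2 in the outer variable
  have L3 : ∀ (x z u : M) (α β : G),
      T (p (p x α u) β z) + T (p (p z α u) β x)
        = p (p (T x) α u) β z + p (p (T z) α u) β x := by
    intro x z u α β
    have h := L2 (x + z) u α β
    simp only [addl, addr, hT] at h
    rw [L2 x u α β, L2 z u α β] at h
    linear_combination (norm := abel1) h
  -- Step 4: T ((y γ x) α m β x) = T (y γ x) α m β x
  have L4 : ∀ (x y m : M) (α β γ : G),
      T (p (p (p y γ x) α m) β x) = p (p (T (p y γ x)) α m) β x := by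
    intro x y m α β γ
    have h := L3 x (p y γ x) m α β
    have e : p (p x α m) β (p y γ x) = p (p x α (p m β y)) γ x := by
      rw [← assoc (p x α m) β y γ x, assoc x α m β y]
    have e2 : p (p (T x) α (p m β y)) γ x = p (p (T x) α m) β (p y γ x) := by
      rw [← assoc (T x) α m β y, assoc (p (T x) α m) β y γ x]
    rw [e, L2 x (p m β y) α γ, e2] at h
    linear_combination (norm := abel1) h
  -- Step 5: G(x,y,δ) α m β (yδx - xδy) = 0
  have L5 : ∀ (x y : M) (δ : G) (α : G) (m : M) (β : G),
      p (p (T (p x δ y) - p (T x) δ y) α m) β (p y δ x - p x δ y) = 0 := by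
    intro x y δ α m β
    have h := L3 (p x δ y) (p y δ x) m α β
    have e1 : p (p (p x δ y) α m) β (p y δ x)
        = p (p x δ (p (p y α m) β y)) δ x := by simp only [assoc]
    have e2 : p (p (p y δ x) α m) β (p x δ y)
        = p (p y δ (p (p x α m) β x)) δ y := by simp only [assoc]
    have e3 : p (p (T x) δ (p (p y α m) β y)) δ x
        = p (p (p (T x) δ y) α m) β (p y δ x) := by simp only [assoc]
    have e4 : p (p (T y) δ (p (p x α m) β x)) δ y
        = p (p (p (T y) δ x) α m) β (p x δ y) := by simp only [assoc]
    rw [e1, e2, L2 x (p (p y α m) β y) δ δ, L2 y (p (p x α m) β x) δ δ, e3, e4] at h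
    have hL1' : T (p y δ x) = p (T x) δ y + p (T y) δ x - T (p x δ y) := by
      linear_combination (norm := abel1) L1 x y δ
    rw [hL1'] at h
    simp only [addl, subl] at h
    simp only [subl, subr]
    linear_combination (norm := abel1) -h
  -- Step 6: if x is δ-central then G(x,y,δ) β m γ x = 0
  have L6 : ∀ (x : M) (δ : G), (∀ z, p x δ z = p z δ x) →
      ∀ (y : M) (β : G) (m : M) (γ : G),
        p (p (T (p x δ y) - p (T x) δ y) β m) γ x = 0 := by
    intro x δ hc y β m γ
    have h := L2 x (p y β m) δ γ
    have e1 : p (p x δ (p y β m)) γ x = p (p (p y δ x) β m) γ x := by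
      rw [← assoc x δ y β m, hc y]
    rw [e1, L4 x y m β γ δ, ← hc y] at h
    have e2 : p (p (T x) δ (p y β m)) γ x = p (p (p (T x) δ y) β m) γ x := by
      rw [← assoc (T x) δ y β m]
    rw [e2] at h
    simp only [subl]
    rw [h, sub_self]
  -- Final argument
  intro x y δ
  by_contra hg0
  have dich : ∀ z : M, T (p x δ z) = p (T x) δ z ∨ p x δ z = p z δ x := by
    intro z
    rcases prime (T (p x δ z) - p (T x) δ z) (p z δ x - p x δ z)
        (fun m γ ε => L5 x z δ γ m ε) with h | h
    · exact Or.inl (sub_eq_zero.mp h)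
    · exact Or.inr (sub_eq_zero.mp h).symm
  have hxy : p x δ y = p y δ x := by
    rcases dich y with h | h
    · exact absurd h hg0
    · exact h
  have central : ∀ z, p x δ z = p z δ x := by
    intro z
    rcases dich z with h | h
    · rcases dich (y + z) with h2 | h2
      · exfalso
        apply hg0
        rw [addr, hT, h, addr] at h2
        linear_combination (norm := abel1) h2
      · rw [addr, addl, hxy] at h2
        linear_combination (norm := abel1) h2
    · exact h
  rcases prime (T (p x δ y) - p (T x) δ y) x
      (fun m γ ε => L6 x δ central y γ m ε) with h | h
  · exact hg0 (sub_eq_zero.mp h)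
  · apply hg0
    subst h
    rw [p0l, T0, p0l]
end

section
/- Let M be a 2-torsion free semiprime Γ-ring satisfying assumption (A). If T : M → M is an additive map with T(xαx) = T(x)αx for all x ∈ M and α ∈ Γ, then T(xαy) = T(x)αy for all x, y ∈ M and α ∈ Γ. -/
theorem stmt14
    {M G : Type*} [AddCommGroup M] [AddCommGroup G]
    (p : M → G → M → M)
    (addl : ∀ a b α c, p (a + b) α c = p a α c + p b α c)
    (addm : ∀ a α β c, p a (α + β) c = p a α c + p a β c)
    (addr : ∀ a α b c, p a α (b + c) = p a α b + p a α c)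
    (assoc : ∀ a α b β c, p (p a α b) β c = p a α (p b β c))
    (tf : ∀ x : M, 2 • x = 0 → x = 0)
    (hA : ∀ a α b β c, p (p a α b) β c = p (p a β b) α c)
    (semiprime : ∀ a : M, (∀ (x : M) (γ δ : G), p (p a γ x) δ a = 0) → a = 0)
    (T : M → M) (hT : ∀ a b : M, T (a + b) = T a + T b)
    (hTJ : ∀ (x : M) (α : G), T (p x α x) = p (T x) α x)
    : ∀ (x y : M) (α : G), T (p x α y) = p (T x) α y := by
  -- basic lemmas
  have pl0 : ∀ (α : G) (c : M), p 0 α c = 0 := by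
    intro α c
    have h := addl 0 0 α c
    rw [add_zero] at h
    exact left_eq_add.mp h
  have pr0 : ∀ (a : M) (α : G), p a α 0 = 0 := by
    intro a α
    have h := addr a α 0 0
    rw [add_zero] at h
    exact left_eq_add.mp h
  have pnl : ∀ (a : M) (α : G) (c : M), p (-a) α c = -(p a α c) := by
    intro a α c
    have h := addl a (-a) α c
    rw [add_neg_cancel, pl0] at h
    exact eq_neg_of_add_eq_zero_right h.symm
  have pnr : ∀ (a : M) (α : G) (c : M), p a α (-c) = -(p a α c) := by
    intro a α c
    have h := addr a α c (-c)
    rw [add_neg_cancel, pr0] at h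
    exact eq_neg_of_add_eq_zero_right h.symm
  have psl : ∀ (a b : M) (α : G) (c : M), p (a - b) α c = p a α c - p b α c := by
    intro a b α c
    rw [sub_eq_add_neg, addl, pnl, ← sub_eq_add_neg]
  have psr : ∀ (a : M) (α : G) (b c : M), p a α (b - c) = p a α b - p a α c := by
    intro a α b c
    rw [sub_eq_add_neg, addr, pnr, ← sub_eq_add_neg]
  have T0 : T 0 = 0 := by
    have h := hT 0 0
    rw [add_zero] at h
    exact left_eq_add.mp h
  have Tneg : ∀ a : M, T (-a) = -(T a) := by
    intro a
    have h := hT a (-a)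
    rw [add_neg_cancel, T0] at h
    exact eq_neg_of_add_eq_zero_right h.symm
  have Tsub : ∀ a b : M, T (a - b) = T a - T b := by
    intro a b
    rw [sub_eq_add_neg, hT, Tneg, ← sub_eq_add_neg]
  have tf2 : ∀ a : M, a + a = 0 → a = 0 := by
    intro a h
    exact tf a (by rw [two_nsmul]; exact h)
  have tf' : ∀ a b : M, a + a = b + b → a = b := by
    intro a b h
    have e : (a - b) + (a - b) = (a + a) - (b + b) := by abel
    rw [h, sub_self] at e
    exact sub_eq_zero.mp (tf (a - b) (by rw [two_nsmul]; exact e))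
  have hA' : ∀ (a : M) (α : G) (b : M) (β : G) (c : M),
      p a α (p b β c) = p a β (p b α c) := by
    intro a α b β c
    rw [← assoc, ← assoc, hA]
  -- the Jordan defect
  let B : M → G → M → M := fun a γ b => T (p a γ b) - p (T a) γ b
  have hB : ∀ (a : M) (γ : G) (b : M), B a γ b = T (p a γ b) - p (T a) γ b :=
    fun _ _ _ => rfl
  -- (i) linearization
  have L1 : ∀ (x y : M) (α : G), T (p x α y + p y α x) = p (T x) α y + p (T y) α x := by
    intro x y α
    rw [show p x α y + p y α x = p (x + y) α (x + y) - p x α x - p y α y from by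
      rw [addl x y α (x+y), addr x α x y, addr y α x y]; abel]
    rw [Tsub, Tsub, hTJ (x+y) α, hTJ x α, hTJ y α, hT x y, addl (T x) (T y) α (x+y),
      addr (T x) α x y, addr (T y) α x y]
    abel
  have Bneg : ∀ (a b : M) (γ : G), B b γ a = -(B a γ b) := by
    intro a b γ
    have h := L1 a b γ
    rw [hT (p a γ b) (p b γ a)] at h
    rw [hB b γ a, hB a γ b]
    rw [← sub_eq_zero, ← sub_eq_zero_of_eq h]
    abel
  have Badd1 : ∀ (x x' : M) (α : G) (y : M), B (x + x') α y = B x α y + B x' α y := by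
    intro x x' α y
    rw [hB (x+x') α y, hB x α y, hB x' α y, addl x x' α y, hT (p x α y) (p x' α y),
      hT x x', addl (T x) (T x') α y]
    abel
  have Badd3 : ∀ (x : M) (α : G) (y y' : M), B x α (y + y') = B x α y + B x α y' := by
    intro x α y y'
    rw [hB x α (y+y'), hB x α y, hB x α y', addr x α y y', hT (p x α y) (p x α y'),
      addr (T x) α y y']
    abel
  have BaddG : ∀ (x : M) (α δ : G) (y : M), B x (α + δ) y = B x α y + B x δ y := by
    intro x α δ y
    rw [hB x (α+δ) y, hB x α y, hB x δ y, addm x α δ y, hT (p x α y) (p x δ y),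
      addm (T x) α δ y]
    abel
  -- (ii') T(x α y β x) = T(x) α y β x
  have L2 : ∀ (x y : M) (α β : G), T (p (p x α y) β x) = p (p (T x) α y) β x := by
    intro x y α β
    apply tf'
    rw [← hT (p (p x α y) β x) (p (p x α y) β x)]
    rw [show p (p x α y) β x + p (p x α y) β x
        = (p x α (p x β y + p y β x) + p (p x β y + p y β x) α x)
          - (p (p x α x) β y + p y β (p x α x)) from by
      rw [addr x α (p x β y) (p y β x), addl (p x β y) (p y β x) α x]
      simp only [assoc]
      rw [hA' x β y α x]
      abel]
    rw [Tsub, L1 x (p x β y + p y β x) α, L1 x y β, L1 (p x α x) y β, hTJ x α,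
      addr (T x) α (p x β y) (p y β x), addl (p (T x) β y) (p (T y) β x) α x]
    simp only [assoc]
    rw [hA' (T x) β y α x]
    abel
  -- (iii) linearization of L2
  have L3' : ∀ (x z y : M) (α β : G), T (p (p x α y) β z) + T (p (p z α y) β x)
      = p (p (T x) α y) β z + p (p (T z) α y) β x := by
    intro x z y α β
    rw [← hT (p (p x α y) β z) (p (p z α y) β x)]
    rw [show p (p x α y) β z + p (p z α y) β x
        = p (p (x + z) α y) β (x + z) - p (p x α y) β x - p (p z α y) β z from by
      rw [addl x z α y, addl (p x α y) (p z α y) β (x+z), addr (p x α y) β x z,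
        addr (p z α y) β x z]
      abel]
    rw [Tsub, Tsub, L2 (x+z) y α β, L2 x y α β, L2 z y α β, hT x z,
      addl (T x) (T z) α y, addl (p (T x) α y) (p (T z) α y) β (x+z),
      addr (p (T x) α y) β x z, addr (p (T z) α y) β x z]
    abel
  -- R9': B u ρ (w δ v) + B v ρ (w δ u) = 0
  have R9B : ∀ (u v w : M) (ρ δ : G), B u ρ (p w δ v) + B v ρ (p w δ u) = 0 := by
    intro u v w ρ δ
    have h := L3' u v w ρ δ
    simp only [assoc] at h
    rw [hB u ρ (p w δ v), hB v ρ (p w δ u)]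
    rw [← sub_eq_zero_of_eq h]
    abel
  -- (iv) : B(x,y,α) β z γ (yαx - xαy) = 0
  have L5 : ∀ (x y : M) (α β : G) (z : M) (γ : G),
      p (p (B x α y) β z) γ (p y α x - p x α y) = 0 := by
    intro x y α β z γ
    have h := L3' (p x α y) (p y α x) z β γ
    rw [show p (p (p x α y) β z) γ (p y α x) = p (p x α (p y β (p z γ y))) α x from by
      simp only [assoc]] at h
    rw [show p (p (p y α x) β z) γ (p x α y) = p (p y α (p x β (p z γ x))) α y from by
      simp only [assoc]] at h
    rw [L2 x (p y β (p z γ y)) α α, L2 y (p x β (p z γ x)) α α] at h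
    rw [show T (p x α y) = B x α y + p (T x) α y from by rw [hB x α y]; abel] at h
    rw [show T (p y α x) = B y α x + p (T y) α x from by rw [hB y α x]; abel] at h
    rw [addl (B x α y) (p (T x) α y) β z,
      addl (p (B x α y) β z) (p (p (T x) α y) β z) γ (p y α x),
      addl (B y α x) (p (T y) α x) β z,
      addl (p (B y α x) β z) (p (p (T y) α x) β z) γ (p x α y)] at h
    rw [show p (p (p (T x) α y) β z) γ (p y α x)
        = p (p (T x) α (p y β (p z γ y))) α x from by simp only [assoc]] at h
    rw [show p (p (p (T y) α x) β z) γ (p x α y)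
        = p (p (T y) α (p x β (p z γ x))) α y from by simp only [assoc]] at h
    have hz : p (p (B x α y) β z) γ (p y α x) + p (p (B y α x) β z) γ (p x α y) = 0 := by
      rw [← sub_eq_zero_of_eq h.symm]
      abel
    rw [Bneg x y α, pnl, pnl] at hz
    rw [psr, sub_eq_add_neg]
    exact hz
  -- semiprime swap
  have hswap : ∀ a c : M, (∀ (β : G) (w : M) (γ : G), p (p a β w) γ c = 0) →
      ∀ (β : G) (w : M) (γ : G), p (p c β w) γ a = 0 := by
    intro a c h β w γ
    apply semiprime
    intro v δ ε
    rw [show p (p (p (p c β w) γ a) δ v) ε (p (p c β w) γ a)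
        = p c β (p w γ (p (p (p a δ v) ε c) β (p w γ a))) from by simp only [assoc]]
    rw [h δ v ε, pl0, pr0, pr0]
  have L5s : ∀ (x y : M) (α : G), ∀ (δ : G) (v : M) (ε : G),
      p (p (p y α x - p x α y) δ v) ε (B x α y) = 0 :=
    fun x y α => hswap (B x α y) (p y α x - p x α y) (fun β w γ => L5 x y α β w γ)
  -- polarization killer
  have H2 : ∀ (X Y U V : M) (γ : G), p X γ U + p Y γ V = 0 →
      (∀ (δ : G) (v : M) (ε : G), p (p V δ v) ε X = 0) → p X γ U = 0 := by
    intro X Y U V γ hsum hinner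
    have hA2 : p X γ U = -(p Y γ V) := eq_neg_of_add_eq_zero_left hsum
    apply semiprime
    intro v δ ε
    rw [show p (p X γ U) δ v = p (-(p Y γ V)) δ v from by rw [hA2]]
    rw [pnl, pnl, neg_eq_zero]
    rw [show p (p (p Y γ V) δ v) ε (p X γ U)
        = p Y γ (p (p (p V δ v) ε X) γ U) from by simp only [assoc]]
    rw [hinner δ v ε, pl0, pr0]
  have extinner : ∀ (V X : M), (∀ (δ : G) (v : M) (ε : G), p (p V δ v) ε X = 0) →
      ∀ (β : G) (w : M) (δ : G) (v : M) (ε : G), p (p V δ v) ε (p X β w) = 0 := by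
    intro V X h β w δ v ε
    rw [show p (p V δ v) ε (p X β w) = p (p (p V δ v) ε X) β w from
      (assoc (p V δ v) ε X β w).symm]
    rw [h δ v ε, pl0]
  -- (vii)
  have L7 : ∀ (x y y' : M) (α β : G) (z : M) (γ : G),
      p (p (B x α y) β z) γ (p y' α x - p x α y') = 0 := by
    intro x y y' α β z γ
    have h := L5 x (y + y') α β z γ
    rw [Badd3 x α y y'] at h
    rw [addl (B x α y) (B x α y') β z] at h
    rw [addl (p (B x α y) β z) (p (B x α y') β z) γ (p (y + y') α x - p x α (y + y'))] at h
    rw [show p (y + y') α x - p x α (y + y')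
        = (p y α x - p x α y) + (p y' α x - p x α y') from by
      rw [addl y y' α x, addr x α y y']; abel] at h
    rw [addr (p (B x α y) β z) γ (p y α x - p x α y) (p y' α x - p x α y'),
      addr (p (B x α y') β z) γ (p y α x - p x α y) (p y' α x - p x α y')] at h
    rw [L5 x y α β z γ, L5 x y' α β z γ, zero_add, add_zero] at h
    exact H2 (p (B x α y) β z) (p (B x α y') β z) (p y' α x - p x α y')
      (p y α x - p x α y) γ h (extinner _ _ (L5s x y α) β z)
  have L7s : ∀ (x y y' : M) (α : G), ∀ (δ : G) (v : M) (ε : G),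
      p (p (p y' α x - p x α y') δ v) ε (B x α y) = 0 :=
    fun x y y' α => hswap (B x α y) (p y' α x - p x α y') (fun β w γ => L7 x y y' α β w γ)
  -- (viii)
  have L8 : ∀ (x y : M) (α β : G) (z : M) (γ : G) (u y' : M),
      p (p (B x α y) β z) γ (p y' α u - p u α y') = 0 := by
    intro x y α β z γ u y'
    have h := L7 (x + u) y y' α β z γ
    rw [Badd1 x u α y] at h
    rw [addl (B x α y) (B u α y) β z] at h
    rw [addl (p (B x α y) β z) (p (B u α y) β z) γ (p y' α (x + u) - p (x + u) α y')] at h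
    rw [show p y' α (x + u) - p (x + u) α y'
        = (p y' α x - p x α y') + (p y' α u - p u α y') from by
      rw [addr y' α x u, addl x u α y']; abel] at h
    rw [addr (p (B x α y) β z) γ (p y' α x - p x α y') (p y' α u - p u α y'),
      addr (p (B u α y) β z) γ (p y' α x - p x α y') (p y' α u - p u α y')] at h
    rw [L7 x y y' α β z γ, L7 u y y' α β z γ, zero_add, add_zero] at h
    exact H2 (p (B x α y) β z) (p (B u α y) β z) (p y' α u - p u α y')
      (p y' α x - p x α y') γ h (extinner _ _ (L7s x y y' α) β z)
  have L8s : ∀ (x y : M) (α : G) (u y' : M), ∀ (δ : G) (v : M) (ε : G),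
      p (p (p y' α u - p u α y') δ v) ε (B x α y) = 0 :=
    fun x y α u y' => hswap (B x α y) (p y' α u - p u α y')
      (fun β w γ => L8 x y α β w γ u y')
  -- (ix)
  have L9 : ∀ (x y : M) (α β : G) (z : M) (γ : G) (u v : M) (δ : G),
      p (p (B x α y) β z) γ (p u δ v - p v δ u) = 0 := by
    intro x y α β z γ u v δ
    have h := L8 x y (α + δ) β z γ v u
    rw [BaddG x α δ y] at h
    rw [addl (B x α y) (B x δ y) β z] at h
    rw [addl (p (B x α y) β z) (p (B x δ y) β z) γ (p u (α + δ) v - p v (α + δ) u)] at h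
    rw [show p u (α + δ) v - p v (α + δ) u
        = (p u α v - p v α u) + (p u δ v - p v δ u) from by
      rw [addm u α δ v, addm v α δ u]; abel] at h
    rw [addr (p (B x α y) β z) γ (p u α v - p v α u) (p u δ v - p v δ u),
      addr (p (B x δ y) β z) γ (p u α v - p v α u) (p u δ v - p v δ u)] at h
    rw [L8 x y α β z γ v u, L8 x y δ β z γ v u, zero_add, add_zero] at h
    exact H2 (p (B x α y) β z) (p (B x δ y) β z) (p u δ v - p v δ u)
      (p u α v - p v α u) γ h (extinner _ _ (L8s x y α v u) β z)
  -- (X) no-middle chain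
  have LX : ∀ (x y : M) (α β : G), p (B x α y) β (p y α x - p x α y) = 0 := by
    intro x y α β
    have h := L1 (p x α y) (p y α x) β
    rw [hT (p (p x α y) β (p y α x)) (p (p y α x) β (p x α y))] at h
    rw [show p (p x α y) β (p y α x) = p (p x α (p y β y)) α x from by
      simp only [assoc]] at h
    rw [show p (p y α x) β (p x α y) = p (p y α (p x β x)) α y from by
      simp only [assoc]] at h
    rw [L2 x (p y β y) α α, L2 y (p x β x) α α] at h
    rw [show T (p x α y) = B x α y + p (T x) α y from by rw [hB x α y]; abel] at h
    rw [show T (p y α x) = B y α x + p (T y) α x from by rw [hB y α x]; abel] at h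
    rw [addl (B x α y) (p (T x) α y) β (p y α x),
      addl (B y α x) (p (T y) α x) β (p x α y)] at h
    rw [show p (p (T x) α y) β (p y α x) = p (p (T x) α (p y β y)) α x from by
      simp only [assoc]] at h
    rw [show p (p (T y) α x) β (p x α y) = p (p (T y) α (p x β x)) α y from by
      simp only [assoc]] at h
    have hz : p (B x α y) β (p y α x) + p (B y α x) β (p x α y) = 0 := by
      rw [← sub_eq_zero_of_eq h.symm]
      abel
    rw [Bneg x y α, pnl] at hz
    rw [psr, sub_eq_add_neg]
    exact hz
  have LX2 : ∀ (x y : M) (α β : G) (y' : M), p (B x α y) β (p y' α x - p x α y') = 0 := by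
    intro x y α β y'
    have h := LX x (y + y') α β
    rw [Badd3 x α y y'] at h
    rw [addl (B x α y) (B x α y') β (p (y + y') α x - p x α (y + y'))] at h
    rw [show p (y + y') α x - p x α (y + y')
        = (p y α x - p x α y) + (p y' α x - p x α y') from by
      rw [addl y y' α x, addr x α y y']; abel] at h
    rw [addr (B x α y) β (p y α x - p x α y) (p y' α x - p x α y'),
      addr (B x α y') β (p y α x - p x α y) (p y' α x - p x α y')] at h
    rw [LX x y α β, LX x y' α β, zero_add, add_zero] at h
    exact H2 (B x α y) (B x α y') (p y' α x - p x α y') (p y α x - p x α y) β h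
      (L5s x y α)
  have LX3a : ∀ (x y : M) (α β : G) (u y' : M),
      p (B x α y) β (p y' α u - p u α y') = 0 := by
    intro x y α β u y'
    have h := LX2 (x + u) y α β y'
    rw [Badd1 x u α y] at h
    rw [addl (B x α y) (B u α y) β (p y' α (x + u) - p (x + u) α y')] at h
    rw [show p y' α (x + u) - p (x + u) α y'
        = (p y' α x - p x α y') + (p y' α u - p u α y') from by
      rw [addr y' α x u, addl x u α y']; abel] at h
    rw [addr (B x α y) β (p y' α x - p x α y') (p y' α u - p u α y'),
      addr (B u α y) β (p y' α x - p x α y') (p y' α u - p u α y')] at h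
    rw [LX2 x y α β y', LX2 u y α β y', zero_add, add_zero] at h
    exact H2 (B x α y) (B u α y) (p y' α u - p u α y') (p y' α x - p x α y') β h
      (L7s x y y' α)
  have LX3 : ∀ (x y : M) (α β : G) (u v : M) (δ : G),
      p (B x α y) β (p u δ v - p v δ u) = 0 := by
    intro x y α β u v δ
    have h := LX3a x y (α + δ) β v u
    rw [BaddG x α δ y] at h
    rw [addl (B x α y) (B x δ y) β (p u (α + δ) v - p v (α + δ) u)] at h
    rw [show p u (α + δ) v - p v (α + δ) u
        = (p u α v - p v α u) + (p u δ v - p v δ u) from by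
      rw [addm u α δ v, addm v α δ u]; abel] at h
    rw [addr (B x α y) β (p u α v - p v α u) (p u δ v - p v δ u),
      addr (B x δ y) β (p u α v - p v α u) (p u δ v - p v δ u)] at h
    rw [LX3a x y α β v u, LX3a x y δ β v u, zero_add, add_zero] at h
    exact H2 (B x α y) (B x δ y) (p u δ v - p v δ u) (p u α v - p v α u) β h
      (L8s x y α v u)
  -- centrality of B-values
  have central : ∀ (a b : M) (α : G) (δ : G) (r : M),
      p (B a α b) δ r = p r δ (B a α b) := by
    intro a b α δ r
    rw [← sub_eq_zero]
    apply semiprime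
    intro s ε ζ
    have t1 : p (p (p (B a α b) δ r) ε s) ζ (p (B a α b) δ r - p r δ (B a α b)) = 0 := by
      rw [assoc (B a α b) δ r ε s]
      exact L9 a b α δ (p r ε s) ζ (B a α b) r δ
    have t2 : p (p (p r δ (B a α b)) ε s) ζ (p (B a α b) δ r - p r δ (B a α b)) = 0 := by
      rw [assoc r δ (B a α b) ε s, assoc r δ (p (B a α b) ε s) ζ
        (p (B a α b) δ r - p r δ (B a α b))]
      rw [L9 a b α ε s ζ (B a α b) r δ, pr0]
    rw [psl (p (B a α b) δ r) (p r δ (B a α b)) ε s,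
      psl (p (p (B a α b) δ r) ε s) (p (p r δ (B a α b)) ε s) ζ
        (p (B a α b) δ r - p r δ (B a α b)),
      t1, t2, sub_self]
  -- doubling identity
  have D1 : ∀ (a b : M) (α : G) (u : M) (ρ : G),
      p (T u) ρ (B a α b) + p (T (B a α b)) ρ u
      = T (p (B a α b) ρ u) + T (p (B a α b) ρ u) := by
    intro a b α u ρ
    have h := L1 u (B a α b) ρ
    rw [← central a b α ρ u] at h
    rw [hT (p (B a α b) ρ u) (p (B a α b) ρ u)] at h
    exact h.symm
  -- (A)
  have E4 : ∀ (a b : M) (α γ : G),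
      p (B a α b) γ (B a α b)
      = p (T (p a α b)) γ (B a α b) - p (p (T a) α b) γ (B a α b) := by
    intro a b α γ
    rw [show p (B a α b) γ (B a α b)
        = p (B a α b) γ (T (p a α b) - p (T a) α b) from by rw [← hB a α b]]
    rw [psr, central a b α γ (T (p a α b)), central a b α γ (p (T a) α b)]
  -- (step 2)
  have E1 : ∀ (a b : M) (α γ : G),
      p (B a α b) γ (B a α b)
      = B (p (B a α b) γ a) α b + B (p (B a α b) γ a) α b := by
    intro a b α γ
    have t1 : p (B a α b) γ (T (p a α b))
        = T (p (B a α b) γ (p a α b)) + T (p (B a α b) γ (p a α b))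
          - p (T (B a α b)) γ (p a α b) := by
      rw [central a b α γ (T (p a α b))]
      rw [← sub_eq_zero, ← sub_eq_zero_of_eq (D1 a b α (p a α b) γ)]
      abel
    have t2 : p (B a α b) γ (p (T a) α b)
        = p (T (p (B a α b) γ a)) α b + p (T (p (B a α b) γ a)) α b
          - p (p (T (B a α b)) γ a) α b := by
      rw [← assoc (B a α b) γ (T a) α b]
      rw [show p (B a α b) γ (T a)
          = T (p (B a α b) γ a) + T (p (B a α b) γ a) - p (T (B a α b)) γ a from by
        rw [central a b α γ (T a), ← sub_eq_zero, ← sub_eq_zero_of_eq (D1 a b α a γ)]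
        abel]
      rw [psl (T (p (B a α b) γ a) + T (p (B a α b) γ a)) (p (T (B a α b)) γ a) α b,
        addl (T (p (B a α b) γ a)) (T (p (B a α b) γ a)) α b]
    rw [show p (B a α b) γ (B a α b)
        = p (B a α b) γ (T (p a α b) - p (T a) α b) from by rw [← hB a α b]]
    rw [psr, t1, t2]
    rw [← assoc (B a α b) γ a α b, ← assoc (T (B a α b)) γ a α b]
    rw [hB (p (B a α b) γ a) α b]
    abel
  -- (C)
  have E2 : ∀ (a b : M) (α γ : G),
      B (p (B a α b) γ a) α b = B a α (p (B a α b) γ b) := by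
    intro a b α γ
    have h := R9B b a (B a α b) α γ
    rw [Bneg (p (B a α b) γ a) b α] at h
    rw [← sub_eq_zero]
    rw [show B (p (B a α b) γ a) α b - B a α (p (B a α b) γ b)
        = -(-(B (p (B a α b) γ a) α b) + B a α (p (B a α b) γ b)) from by abel, h,
      neg_zero]
  -- (D)
  have E3 : ∀ (a b : M) (α γ : G),
      B a α (p (B a α b) γ b) + B a α (p (B a α b) γ b)
      = (p (T (p a α b)) γ (B a α b) + p (T (B a α b)) γ (p a α b))
        - (p (p (T a) α b) γ (B a α b) + p (p (T a) α b) γ (B a α b)) := by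
    intro a b α γ
    have ea : p a α (p (B a α b) γ b) = p (B a α b) γ (p a α b) := by
      rw [central a b α γ b, ← assoc a α b γ (B a α b), ← central a b α γ (p a α b)]
    have eb : p (T a) α (p (B a α b) γ b) = p (p (T a) α b) γ (B a α b) := by
      rw [central a b α γ b, ← assoc (T a) α b γ (B a α b)]
    rw [hB a α (p (B a α b) γ b), ea, eb]
    rw [← sub_eq_zero, ← sub_eq_zero_of_eq (D1 a b α (p a α b) γ).symm]
    abel
  -- (★)
  have star : ∀ (a b : M) (α γ : G),
      p (T (B a α b)) γ (p a α b) = p (p (T a) α b) γ (B a α b) := by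
    intro a b α γ
    have e14 : p (T (p a α b)) γ (B a α b) - p (p (T a) α b) γ (B a α b)
        = (p (T (p a α b)) γ (B a α b) + p (T (B a α b)) γ (p a α b))
          - (p (p (T a) α b) γ (B a α b) + p (p (T a) α b) γ (B a α b)) := by
      calc p (T (p a α b)) γ (B a α b) - p (p (T a) α b) γ (B a α b)
          = p (B a α b) γ (B a α b) := (E4 a b α γ).symm
        _ = B (p (B a α b) γ a) α b + B (p (B a α b) γ a) α b := E1 a b α γ
        _ = B a α (p (B a α b) γ b) + B a α (p (B a α b) γ b) := by rw [E2 a b α γ]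
        _ = _ := E3 a b α γ
    rw [← sub_eq_zero, ← sub_eq_zero_of_eq e14.symm]
    abel
  -- commuting pairs give exact centralizer identity
  have czero : ∀ (a b : M) (α : G), p a α b = p b α a → B a α b = 0 := by
    intro a b α hc
    have hq : ∀ γ : G, p (B a α b) γ (B a α b) = 0 := by
      intro γ
      have s1 := star a b α γ
      have s2 := star b a α γ
      rw [Bneg a b α, Tneg, pnl, pnr, neg_inj] at s2
      rw [hc] at s1
      have h12 : p (p (T a) α b) γ (B a α b) = p (p (T b) α a) γ (B a α b) :=
        s1.symm.trans s2
      have hbb : p (T b) α a = T (p a α b) + B a α b := by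
        have h := Bneg a b α
        rw [hB b α a] at h
        rw [← hc] at h
        rw [← sub_eq_zero, ← sub_eq_zero_of_eq h.symm]
        abel
      have key : p (p (T a) α b) γ (B a α b) - p (p (T b) α a) γ (B a α b) = 0 := by
        rw [h12, sub_self]
      rw [← psl (p (T a) α b) (p (T b) α a) γ (B a α b)] at key
      rw [show p (T a) α b - p (T b) α a = -(B a α b) - B a α b from by
        rw [hbb, hB a α b]; abel] at key
      rw [psl (-(B a α b)) (B a α b) γ (B a α b), pnl] at key
      have hsum : p (B a α b) γ (B a α b) + p (B a α b) γ (B a α b) = 0 := by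
        rw [show p (B a α b) γ (B a α b) + p (B a α b) γ (B a α b)
            = -(-(p (B a α b) γ (B a α b)) - p (B a α b) γ (B a α b)) from by abel,
          key, neg_zero]
      exact tf2 _ hsum
    apply semiprime
    intro m γ δ
    rw [assoc (B a α b) γ m δ (B a α b),
      show p m δ (B a α b) = p (B a α b) δ m from (central a b α δ m).symm,
      ← assoc (B a α b) γ (B a α b) δ m, hq γ, pl0]
  -- final assembly
  intro x y α
  have hcomm : ∀ γ : G, p (p (B x α y) γ x) α y = p y α (p (B x α y) γ x) := by
    intro γ
    rw [assoc (B x α y) γ x α y]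
    rw [show p (B x α y) γ x = p x γ (B x α y) from central x y α γ x]
    rw [← assoc y α x γ (B x α y)]
    rw [← central x y α γ (p y α x)]
    rw [← sub_eq_zero, ← psr]
    exact LX3 x y α γ x y α
  have hqf : ∀ γ : G, p (B x α y) γ (B x α y) = 0 := by
    intro γ
    rw [E1 x y α γ, czero (p (B x α y) γ x) y α (hcomm γ), add_zero]
  have hθ : B x α y = 0 := by
    apply semiprime
    intro m γ δ
    rw [assoc (B x α y) γ m δ (B x α y),
      show p m δ (B x α y) = p (B x α y) δ m from (central x y α δ m).symm,
      ← assoc (B x α y) γ (B x α y) δ m, hqf γ, pl0]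
  have h2 : T (p x α y) - p (T x) α y = 0 := by rw [← hB x α y]; exact hθ
  exact sub_eq_zero.mp h2
end
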